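/- arXiv:2307.01826 — 5 statements merged into one kernel-verified Lean document; each statement's English description precedes it below -/
import Mathlib

section
/- Let T be a bi-valent tree in Bi(m,n) equipped with a linear order on its vertex set, and let T_i be its internal subtree. Every automorphism of T restricts to an automorphism of T_i, giving a group homomorphism Res : Aut(T) → Aut(T_i). This homomorphism is surjective, and the map ψ : Aut(T_i) → Aut(T) sending an automorphism of T_i to its unique 2-ordered extension is a group homomorphism that is a section of Res. Consequently the sequence 1 → Aut_e → Aut(T) → Aut(T_i) → 1 is split exact, and Aut(T) is isomorphic to the semidirect product Aut_e ⋊ Aut(T_i), where Aut_e denotes the kernel of Res. -/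
open SimpleGraph

/-- The degree of a vertex of a graph, as the natural cardinality of its neighbor set. -/
noncomputable def gdeg {V : Type*} (G : SimpleGraph V) (v : V) : ℕ :=
  (G.neighborSet v).ncard

/-- The automorphism group of a graph, as a subgroup of the permutation group of the
vertices. -/
def autGroup {V : Type*} (G : SimpleGraph V) : Subgroup (Equiv.Perm V) where
  carrier := {σ | ∀ u v, G.Adj (σ u) (σ v) ↔ G.Adj u v}
  one_mem' := by
    simp only [Set.mem_setOf_eq]
    intro u v
    simp
  mul_mem' := by
    intro a b ha hb
    simp only [Set.mem_setOf_eq] at *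
    intro u v
    rw [Equiv.Perm.mul_apply, Equiv.Perm.mul_apply, ha, hb]
  inv_mem' := by
    intro σ hσ
    simp only [Set.mem_setOf_eq] at *
    intro u v
    conv_rhs => rw [← σ.apply_symm_apply u, ← σ.apply_symm_apply v]
    exact (hσ _ _).symm

/-!
Automorphisms preserve degrees, so they preserve the internal vertices and restrict to `T_i`.
Conversely, an automorphism `τ` of `T_i` preserves the degree in `T_i` of every internal vertex
`p`, hence also the number `n - deg_{T_i} p` of leaves hanging on `p`. Extending `τ` by the unique
order-preserving bijection from the leaves at `p` to the leaves at `τ p` gives an automorphism of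
`T`; uniqueness of these bijections makes the extension multiplicative, and it is `2`-ordered
because two leaves at distance `2` hang on the same vertex. A homomorphic section of `Res`
splits the extension `1 → Aut_e → Aut(T) → Aut(T_i) → 1`.
-/

theorem MonoidHom.exists_mulEquiv_semidirectProduct_ker {G H : Type*} [Group G] [Group H]
    (φ : G →* H) (s : H →* G) (hs : φ.comp s = MonoidHom.id H) :
    ∃ act : H →* MulAut φ.ker, Nonempty (φ.ker ⋊[act] H ≃* G) := by
  have hright : Function.RightInverse s φ := DFunLike.congr_fun hs
  let S : GroupExtension φ.ker G H :=
    { inl := φ.ker.subtype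
      rightHom := φ
      inl_injective := Subtype.val_injective
      range_inl_eq_ker_rightHom := φ.ker.range_subtype
      rightHom_surjective := hright.surjective }
  let split : S.Splitting := ⟨s, hright⟩
  exact ⟨split.conjAct, ⟨split.semidirectProductMulEquiv⟩⟩

def Finset.orderIsoOfCardEq {α : Type*} [LinearOrder α] {s t : Finset α}
    (h : s.card = t.card) : s ≃o t :=
  ((s.orderIsoOfFin rfl).symm.trans (Fin.castOrderIso h)).trans (t.orderIsoOfFin rfl)

namespace SimpleGraph

section Restriction

variable {V : Type*} {G : SimpleGraph V}

lemma gdeg_apply_of_mem_autGroup {σ : Equiv.Perm V} (hσ : σ ∈ autGroup G) (v : V) :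
    gdeg G (σ v) = gdeg G v := by
  have : G.neighborSet (σ v) = σ '' G.neighborSet v := by
    ext x
    obtain ⟨y, rfl⟩ := σ.surjective x
    simp only [mem_neighborSet, σ.injective.mem_set_image]
    exact hσ v y
  rw [gdeg, gdeg, this, Set.ncard_image_of_injective _ σ.injective]

lemma gdeg_induce (s : Set V) (p : s) :
    gdeg (G.induce s) p = (G.neighborSet p ∩ s).ncard := by
  have : Subtype.val '' (G.induce s).neighborSet p = G.neighborSet p ∩ s := by
    ext x
    simp only [Set.mem_image, mem_neighborSet, comap_adj, Function.Embedding.coe_subtype,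
      Set.mem_inter_iff, Subtype.exists, exists_and_right, exists_eq_right]
    tauto
  rw [gdeg, ← this, Set.ncard_image_of_injective _ Subtype.val_injective]

variable (G) in
def autGroupRestrict (s : Set V) (hs : ∀ σ ∈ autGroup G, ∀ v, σ v ∈ s ↔ v ∈ s) :
    autGroup G →* autGroup (G.induce s) where
  toFun σ := ⟨σ.1.subtypePerm (hs σ σ.2), fun u v => σ.2 u v⟩
  map_one' := rfl
  map_mul' _ _ := rfl

end Restriction

section LeafParent

variable {V : Type*} (T : SimpleGraph V)

lemma eq_of_adj_of_adj_of_gdeg_eq_one {v a b : V} (hv : gdeg T v = 1) (ha : T.Adj v a)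
    (hb : T.Adj v b) : a = b := by
  obtain ⟨c, hc⟩ := Set.ncard_eq_one.mp hv
  rw [← mem_neighborSet, hc] at ha hb
  exact ha.trans hb.symm

/-- Junk value `v` when `v` is not a leaf. -/
noncomputable def leafParent (v : V) : V :=
  if h : gdeg T v = 1 then (Set.ncard_eq_one.mp h).choose else v

variable {T}

lemma adj_leafParent {v : V} (hv : gdeg T v = 1) : T.Adj v (leafParent T v) := by
  rw [leafParent, dif_pos hv, ← mem_neighborSet]
  exact (Set.ext_iff.mp (Set.ncard_eq_one.mp hv).choose_spec _).mpr rfl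

lemma leafParent_eq_of_adj {v p : V} (hv : gdeg T v = 1) (hp : T.Adj v p) :
    leafParent T v = p :=
  eq_of_adj_of_adj_of_gdeg_eq_one T hv (adj_leafParent hv) hp

lemma eq_or_eq_of_adj_of_gdeg_eq_one (hc : T.Connected) {u v : V} (huv : T.Adj u v)
    (hu : gdeg T u = 1) (hv : gdeg T v = 1) (w : V) : w = u ∨ w = v := by
  have closed : ∀ x y : V, T.Walk x y → x = u ∨ x = v → y = u ∨ y = v := by
    intro x y p
    induction p with
    | nil => exact id
    | cons hxy _ ih =>
      rintro (rfl | rfl)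
      · exact ih (.inr (eq_of_adj_of_adj_of_gdeg_eq_one T hu hxy huv))
      · exact ih (.inl (eq_of_adj_of_adj_of_gdeg_eq_one T hv hxy huv.symm))
  exact closed u w (hc.preconnected u w).some (.inl rfl)

lemma exists_adj_adj_of_dist_eq_two {u v : V} (huv : T.dist u v = 2) :
    ∃ w, T.Adj u w ∧ T.Adj w v := by
  have hr := Reachable.of_dist_ne_zero (huv ▸ two_ne_zero)
  have : T.edist u v = 2 := by rw [← hr.coe_dist_eq_edist, huv]; rfl
  obtain ⟨w, hw⟩ := (edist_eq_two_iff.mp this).2.2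
  rw [mem_commonNeighbors] at hw
  exact ⟨w, hw.1, hw.2.symm⟩

end LeafParent

section Bivalent

variable {V : Type*} {T : SimpleGraph V} {n : ℕ}

/-- Among bi-valent trees, `gdeg_leafParent` only excludes the single edge, which has no internal
vertex. -/
structure IsBivalent (T : SimpleGraph V) (n : ℕ) : Prop where
  one_lt : 1 < n
  gdeg_eq_one_or : ∀ v, gdeg T v = 1 ∨ gdeg T v = n
  gdeg_leafParent : ∀ v, gdeg T v = 1 → gdeg T (leafParent T v) = n

lemma IsBivalent.of_connected (hn : 1 < n) (hc : T.Connected)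
    (hbi : ∀ v, gdeg T v = 1 ∨ gdeg T v = n) (hI : ∃ u, gdeg T u = n) : T.IsBivalent n := by
  refine ⟨hn, hbi, fun v hv => (hbi _).resolve_left fun hp => ?_⟩
  obtain ⟨u, hu⟩ := hI
  rcases eq_or_eq_of_adj_of_gdeg_eq_one hc (adj_leafParent hv) hv hp u with rfl | rfl <;> omega

section Leaves

variable [Fintype V]

variable (T) in
noncomputable def leavesAt (p : V) : Finset V :=
  (Set.toFinite {v | T.Adj p v ∧ gdeg T v = 1}).toFinset

lemma mem_leavesAt {p v : V} : v ∈ leavesAt T p ↔ T.Adj p v ∧ gdeg T v = 1 :=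
  Set.Finite.mem_toFinset _

lemma leaf_mem_leavesAt_leafParent {v : V} (hv : gdeg T v = 1) :
    v ∈ leavesAt T (leafParent T v) :=
  mem_leavesAt.mpr ⟨(adj_leafParent hv).symm, hv⟩

lemma IsBivalent.coe_leavesAt (h : T.IsBivalent n) (p : V) :
    (leavesAt T p : Set V) = T.neighborSet p \ {v | gdeg T v = n} := by
  ext v
  have := h.one_lt
  rcases h.gdeg_eq_one_or v with hv | hv <;>
    simp [mem_leavesAt, hv] <;> omega

lemma IsBivalent.card_leavesAt_eq (h : T.IsBivalent n)
    {τ : Equiv.Perm {v | gdeg T v = n}} (hτ : τ ∈ autGroup (T.induce {v | gdeg T v = n}))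
    {p q : V} (hp : gdeg T p = n) (hq : (τ ⟨p, hp⟩ : V) = q) :
    (leavesAt T p).card = (leavesAt T q).card := by
  have hqn : gdeg T q = n := hq ▸ (τ ⟨p, hp⟩).2
  have hinduce := gdeg_apply_of_mem_autGroup hτ ⟨p, hp⟩
  rw [gdeg_induce, gdeg_induce, hq] at hinduce
  dsimp only at hinduce
  have hsplit := fun r => Set.ncard_inter_add_ncard_sdiff_eq_ncard (T.neighborSet r)
    {v | gdeg T v = n}
  have hp' := hsplit p
  have hq' := hsplit q
  rw [← gdeg, hp] at hp'
  rw [← gdeg, hqn] at hq'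
  rw [← Set.ncard_coe_finset, ← Set.ncard_coe_finset, h.coe_leavesAt, h.coe_leavesAt]
  omega

section Extension

variable [LinearOrder V]

noncomputable def extendLeaves (h : T.IsBivalent n)
    (τ : autGroup (T.induce {v | gdeg T v = n})) (v : V) : V :=
  if hv : gdeg T v = n then τ.1 ⟨v, hv⟩
  else
    have hv1 : gdeg T v = 1 := (h.gdeg_eq_one_or v).resolve_right hv
    Finset.orderIsoOfCardEq (h.card_leavesAt_eq τ.2 (h.gdeg_leafParent v hv1) rfl)
      ⟨v, leaf_mem_leavesAt_leafParent hv1⟩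

variable (h : T.IsBivalent n)

lemma extendLeaves_of_internal (τ : autGroup (T.induce {v | gdeg T v = n})) {v : V}
    (hv : gdeg T v = n) : extendLeaves h τ v = τ.1 ⟨v, hv⟩ :=
  dif_pos hv

lemma extendLeaves_of_mem_leavesAt (τ : autGroup (T.induce {v | gdeg T v = n})) {p q v : V}
    (hp : gdeg T p = n) (hq : (τ.1 ⟨p, hp⟩ : V) = q) (hv : v ∈ leavesAt T p)
    (e : leavesAt T p ≃o leavesAt T q) :
    extendLeaves h τ v = e ⟨v, hv⟩ := by
  obtain ⟨hpv, hv1⟩ := mem_leavesAt.mp hv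
  obtain rfl := leafParent_eq_of_adj hv1 hpv.symm
  subst hq
  rw [extendLeaves, dif_neg (by have := h.one_lt; omega)]
  exact congrArg (fun e : leavesAt T _ ≃o leavesAt T _ => (e ⟨v, hv⟩ : V)) (Subsingleton.elim _ _)

lemma extendLeaves_mem_leavesAt (τ : autGroup (T.induce {v | gdeg T v = n})) {p v : V}
    (hp : gdeg T p = n) (hv : v ∈ leavesAt T p) :
    extendLeaves h τ v ∈ leavesAt T (τ.1 ⟨p, hp⟩) := by
  rw [extendLeaves_of_mem_leavesAt h τ hp rfl hv
    (Finset.orderIsoOfCardEq (h.card_leavesAt_eq τ.2 hp rfl))]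
  exact Subtype.coe_prop _

lemma extendLeaves_one (v : V) : extendLeaves h 1 v = v := by
  by_cases hv : gdeg T v = n
  · exact extendLeaves_of_internal h 1 hv
  · have hv1 := (h.gdeg_eq_one_or v).resolve_right hv
    exact extendLeaves_of_mem_leavesAt h 1 (h.gdeg_leafParent v hv1) rfl
      (leaf_mem_leavesAt_leafParent hv1) (OrderIso.refl _)

lemma extendLeaves_mul (τ₁ τ₂ : autGroup (T.induce {v | gdeg T v = n})) (v : V) :
    extendLeaves h (τ₁ * τ₂) v = extendLeaves h τ₁ (extendLeaves h τ₂ v) := by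
  by_cases hv : gdeg T v = n
  · rw [extendLeaves_of_internal h _ hv, extendLeaves_of_internal h _ hv,
      extendLeaves_of_internal h _ (τ₂.1 ⟨v, hv⟩).2]
    rfl
  have hv1 := (h.gdeg_eq_one_or v).resolve_right hv
  have hvp := leaf_mem_leavesAt_leafParent hv1
  have hp := h.gdeg_leafParent v hv1
  obtain ⟨q, hq⟩ : ∃ q, (τ₂.1 ⟨_, hp⟩ : V) = q := ⟨_, rfl⟩
  have hqn : gdeg T q = n := hq ▸ (τ₂.1 ⟨_, hp⟩).2
  obtain ⟨r, hr⟩ : ∃ r, (τ₁.1 ⟨q, hqn⟩ : V) = r := ⟨_, rfl⟩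
  have hpr : ((τ₁ * τ₂).1 ⟨_, hp⟩ : V) = r := by
    rw [← hr]
    exact congrArg (fun x => (τ₁.1 x : V)) (Subtype.ext hq)
  let e₂ := Finset.orderIsoOfCardEq (h.card_leavesAt_eq τ₂.2 hp hq)
  let e₁ := Finset.orderIsoOfCardEq (h.card_leavesAt_eq τ₁.2 hqn hr)
  rw [extendLeaves_of_mem_leavesAt h τ₂ hp hq hvp e₂,
    extendLeaves_of_mem_leavesAt h τ₁ hqn hr (e₂ ⟨v, hvp⟩).2 e₁,
    extendLeaves_of_mem_leavesAt h (τ₁ * τ₂) hp hpr hvp (e₂.trans e₁)]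
  rfl

lemma extendLeaves_adj (τ : autGroup (T.induce {v | gdeg T v = n})) {u v : V}
    (huv : T.Adj u v) : T.Adj (extendLeaves h τ u) (extendLeaves h τ v) := by
  have internal_leaf : ∀ {u v : V}, gdeg T u = n → gdeg T v = 1 → T.Adj u v →
      T.Adj (extendLeaves h τ u) (extendLeaves h τ v) := by
    intro u v hu hv huv
    rw [extendLeaves_of_internal h τ hu]
    exact (mem_leavesAt.mp (extendLeaves_mem_leavesAt h τ hu (mem_leavesAt.mpr ⟨huv, hv⟩))).1
  rcases h.gdeg_eq_one_or u with hu | hu <;> rcases h.gdeg_eq_one_or v with hv | hv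
  · have := h.gdeg_leafParent u hu
    rw [leafParent_eq_of_adj hu huv] at this
    have := h.one_lt
    omega
  · exact (internal_leaf hv hu huv.symm).symm
  · exact internal_leaf hu hv huv
  · rw [extendLeaves_of_internal h τ hu, extendLeaves_of_internal h τ hv]
    exact (τ.2 ⟨u, hu⟩ ⟨v, hv⟩).mpr huv

lemma extendLeaves_adj_iff (τ : autGroup (T.induce {v | gdeg T v = n})) {u v : V} :
    T.Adj (extendLeaves h τ u) (extendLeaves h τ v) ↔ T.Adj u v := by
  refine ⟨fun huv => ?_, extendLeaves_adj h τ⟩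
  simpa only [← extendLeaves_mul, inv_mul_cancel, extendLeaves_one] using
    extendLeaves_adj h τ⁻¹ huv

noncomputable def extendLeavesHom : autGroup (T.induce {v | gdeg T v = n}) →* autGroup T where
  toFun τ := by
    refine ⟨⟨extendLeaves h τ, extendLeaves h τ⁻¹, fun v => ?_, fun v => ?_⟩,
      fun u v => extendLeaves_adj_iff h τ⟩
    · rw [← extendLeaves_mul, inv_mul_cancel, extendLeaves_one]
    · rw [← extendLeaves_mul, mul_inv_cancel, extendLeaves_one]
  map_one' := by ext v; exact extendLeaves_one h v
  map_mul' τ₁ τ₂ := by ext v; exact extendLeaves_mul h τ₁ τ₂ v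

lemma extendLeaves_lt_of_dist_eq_two (τ : autGroup (T.induce {v | gdeg T v = n})) {v w : V}
    (hv : gdeg T v = 1) (hw : gdeg T w = 1) (hvw : T.dist v w = 2) (hlt : v < w) :
    extendLeaves h τ v < extendLeaves h τ w := by
  obtain ⟨p, hvp, hpw⟩ := exists_adj_adj_of_dist_eq_two hvw
  have hp : gdeg T p = n := leafParent_eq_of_adj hv hvp ▸ h.gdeg_leafParent v hv
  have hvL : v ∈ leavesAt T p := mem_leavesAt.mpr ⟨hvp.symm, hv⟩
  have hwL : w ∈ leavesAt T p := mem_leavesAt.mpr ⟨hpw, hw⟩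
  let e := Finset.orderIsoOfCardEq (h.card_leavesAt_eq τ.2 hp rfl)
  rw [extendLeaves_of_mem_leavesAt h τ hp rfl hvL e, extendLeaves_of_mem_leavesAt h τ hp rfl hwL e]
  exact e.strictMono (Subtype.mk_lt_mk.mpr hlt)

end Extension

end Leaves

end Bivalent

end SimpleGraph

lemma exists_twoOrdered_extension {V : Type*} [Fintype V] [LinearOrder V] {n : ℕ} (hn : 1 < n)
    {T : SimpleGraph V} (hc : T.Connected) (hbi : ∀ v, gdeg T v = 1 ∨ gdeg T v = n) :
    ∃ sec : autGroup (T.induce {v | gdeg T v = n}) →* autGroup T,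
      (∀ (τ : autGroup (T.induce {v | gdeg T v = n})) (x : {v | gdeg T v = n}),
        (sec τ : Equiv.Perm V) x = (τ : Equiv.Perm {v | gdeg T v = n}) x) ∧
      ∀ (τ : autGroup (T.induce {v | gdeg T v = n})) (v w : V),
        gdeg T v = 1 → gdeg T w = 1 → T.dist v w = 2 → v < w →
        (sec τ : Equiv.Perm V) v < (sec τ : Equiv.Perm V) w := by
  by_cases hI : ∃ u, gdeg T u = n
  · have h := IsBivalent.of_connected hn hc hbi hI
    exact ⟨extendLeavesHom h, fun τ x => extendLeaves_of_internal h τ x.2,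
      fun τ v w hv hw hvw hlt => extendLeaves_lt_of_dist_eq_two h τ hv hw hvw hlt⟩
  · exact ⟨1, fun _ x => (hI ⟨x, x.2⟩).elim, fun _ _ _ _ _ _ hlt => hlt⟩

theorem stmt_3_general {V : Type*} [Fintype V] [LinearOrder V] {n : ℕ} (hn : 1 < n)
    (T : SimpleGraph V) (hT : T.IsTree)
    (hbi : ∀ v, gdeg T v = 1 ∨ gdeg T v = n) :
    ∃ Res : autGroup T →* autGroup (T.induce {v | gdeg T v = n}),
      (∀ (σ : autGroup T) (x : {v | gdeg T v = n}),
          (((Res σ : Equiv.Perm {v | gdeg T v = n}) x : V)) = (σ : Equiv.Perm V) (x : V)) ∧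
      Function.Surjective Res ∧
      ∃ sec : autGroup (T.induce {v | gdeg T v = n}) →* autGroup T,
        Res.comp sec = MonoidHom.id _ ∧
        (∀ (τ : autGroup (T.induce {v | gdeg T v = n})) (x : {v | gdeg T v = n}),
            (sec τ : Equiv.Perm V) (x : V) =
              (((τ : Equiv.Perm {v | gdeg T v = n}) x : {v | gdeg T v = n}) : V)) ∧
        (∀ (τ : autGroup (T.induce {v | gdeg T v = n})) (v w : V),
            gdeg T v = 1 → gdeg T w = 1 → T.dist v w = 2 → v < w →
            (sec τ : Equiv.Perm V) v < (sec τ : Equiv.Perm V) w) ∧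
        ∃ act : autGroup (T.induce {v | gdeg T v = n}) →* MulAut Res.ker,
          Nonempty (Res.ker ⋊[act] autGroup (T.induce {v | gdeg T v = n}) ≃* autGroup T) := by
  let Res := autGroupRestrict T {v | gdeg T v = n} fun σ hσ v => by
    simp [gdeg_apply_of_mem_autGroup hσ]
  obtain ⟨sec, hsec_apply, hsec_lt⟩ := exists_twoOrdered_extension hn hT.connected hbi
  have hsec : Res.comp sec = MonoidHom.id _ := by
    ext τ x
    exact hsec_apply τ x
  exact ⟨Res, fun _ _ => rfl, fun τ => ⟨sec τ, DFunLike.congr_fun hsec τ⟩, sec, hsec,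
    hsec_apply, hsec_lt, Res.exists_mulEquiv_semidirectProduct_ker sec hsec⟩

/-- For a bi-valent tree `T` in `Bi(m, n)` with a linear order on its
vertices, restriction to the internal subtree gives a surjective group homomorphism
`Res : Aut(T) →* Aut(T_i)`; the map sending an automorphism of `T_i` to its unique
`2`-ordered extension is a group-homomorphism section of `Res`. Hence the sequence
`1 → Aut_e → Aut(T) → Aut(T_i) → 1` is split exact and
`Aut(T) ≃ Aut_e ⋊ Aut(T_i)`, where `Aut_e = ker Res`. -/
theorem stmt_3 {V : Type*} [Fintype V] [LinearOrder V] {n m : ℕ} (hn : 1 < n)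
    (T : SimpleGraph V) (hT : T.IsTree)
    (hbi : ∀ v, gdeg T v = 1 ∨ gdeg T v = n)
    (hm : {v | gdeg T v = n}.ncard = m) :
    ∃ Res : autGroup T →* autGroup (T.induce {v | gdeg T v = n}),
      (∀ (σ : autGroup T) (x : {v | gdeg T v = n}),
          (((Res σ : Equiv.Perm {v | gdeg T v = n}) x : V)) = (σ : Equiv.Perm V) (x : V)) ∧
      Function.Surjective Res ∧
      ∃ sec : autGroup (T.induce {v | gdeg T v = n}) →* autGroup T,
        Res.comp sec = MonoidHom.id _ ∧
        (∀ (τ : autGroup (T.induce {v | gdeg T v = n})) (x : {v | gdeg T v = n}),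
            (sec τ : Equiv.Perm V) (x : V) =
              (((τ : Equiv.Perm {v | gdeg T v = n}) x : {v | gdeg T v = n}) : V)) ∧
        (∀ (τ : autGroup (T.induce {v | gdeg T v = n})) (v w : V),
            gdeg T v = 1 → gdeg T w = 1 → T.dist v w = 2 → v < w →
            (sec τ : Equiv.Perm V) v < (sec τ : Equiv.Perm V) w) ∧
        ∃ act : autGroup (T.induce {v | gdeg T v = n}) →* MulAut Res.ker,
          Nonempty (Res.ker ⋊[act] autGroup (T.induce {v | gdeg T v = n}) ≃* autGroup T) :=
  stmt_3_general hn T hT hbi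
end

section
/- Two bi-valent trees T and T' in Bi(m,n) are isomorphic as graphs if and only if their internal subtrees T_i and T_i' are isomorphic as graphs. -/
open SimpleGraph

lemma gdeg_map {V V' : Type*} {G : SimpleGraph V} {G' : SimpleGraph V'} (e : G ≃g G') (v : V) :
    gdeg G' (e v) = gdeg G v := by
  unfold gdeg
  rw [← Nat.card_coe_set_eq, ← Nat.card_coe_set_eq]
  exact Nat.card_congr (e.mapNeighborSet v).symm

lemma adj_iff_of_nbr {V : Type*} {G : SimpleGraph V} {v p : V}
    (hv : G.neighborSet v = {p}) (x : V) : G.Adj x v ↔ x = p := by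
  rw [adj_comm, ← SimpleGraph.mem_neighborSet, hv, Set.mem_singleton_iff]

lemma walk_confine {V : Type*} {G : SimpleGraph V} {v p : V}
    (hv : G.neighborSet v = {p}) (hp : G.neighborSet p = {v})
    {a b : V} (w : G.Walk a b) (ha : a = v ∨ a = p) : b = v ∨ b = p := by
  induction w with
  | nil => exact ha
  | @cons a c b h q ih =>
    apply ih
    rcases ha with rfl | rfl
    · have : c ∈ G.neighborSet a := h
      rw [hv] at this
      right; exact this
    · have : c ∈ G.neighborSet a := h
      rw [hp] at this
      left; exact this

lemma leafPar_internal {V : Type*} [Fintype V] {n : ℕ} (hn : 1 < n) {G : SimpleGraph V}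
    (hc : G.Connected) (hbi : ∀ v, gdeg G v = 1 ∨ gdeg G v = n)
    {v p : V} (hv : G.neighborSet v = {p}) (hI : {v | gdeg G v = n}.Nonempty) :
    gdeg G p = n := by
  rcases hbi p with hp1 | hpn
  · exfalso
    obtain ⟨q, hq⟩ := Set.ncard_eq_one.mp hp1
    have hvp : G.Adj v p := by
      have : p ∈ G.neighborSet v := by rw [hv]; rfl
      exact this
    have hq' : q = v := by
      have : v ∈ G.neighborSet p := hvp.symm
      rw [hq] at this; exact this.symm
    rw [hq'] at hq
    obtain ⟨u, hu⟩ := hI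
    have := walk_confine hv hq (hc.preconnected v u).some (Or.inl rfl)
    rcases this with rfl | rfl
    · rw [Set.mem_setOf_eq] at hu
      have : gdeg G u = 1 := Set.ncard_eq_one.mpr ⟨p, hv⟩
      omega
    · rw [Set.mem_setOf_eq] at hu
      have : gdeg G u = 1 := Set.ncard_eq_one.mpr ⟨v, hq⟩
      omega
  · exact hpn

lemma all_leaves_structure {V : Type*} [Fintype V] {G : SimpleGraph V}
    (hc : G.Connected) (h1 : ∀ v, gdeg G v = 1) :
    ∃ v0 p0 : V, v0 ≠ p0 ∧ (∀ u, u = v0 ∨ u = p0) ∧ (∀ a b, G.Adj a b ↔ a ≠ b) := by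
  have hne : Nonempty V := hc.nonempty
  obtain ⟨v0⟩ := hne
  obtain ⟨p0, hv0⟩ := Set.ncard_eq_one.mp (h1 v0)
  have hadj0 : G.Adj v0 p0 := by
    have : p0 ∈ G.neighborSet v0 := by rw [hv0]; rfl
    exact this
  obtain ⟨q, hq⟩ := Set.ncard_eq_one.mp (h1 p0)
  have hq' : q = v0 := by
    have : v0 ∈ G.neighborSet p0 := hadj0.symm
    rw [hq] at this; exact this.symm
  rw [hq'] at hq
  have hall : ∀ u, u = v0 ∨ u = p0 :=
    fun u => walk_confine hv0 hq (hc.preconnected v0 u).some (Or.inl rfl)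
  refine ⟨v0, p0, hadj0.ne, hall, fun a b => ⟨fun h => h.ne, fun h => ?_⟩⟩
  rcases hall a with rfl | rfl <;> rcases hall b with rfl | rfl
  · exact absurd rfl h
  · exact hadj0
  · exact hadj0.symm
  · exact absurd rfl h

lemma iso_of_all_leaves {V V' : Type*} [Fintype V] [Fintype V']
    {G : SimpleGraph V} {G' : SimpleGraph V'}
    (hc : G.Connected) (hc' : G'.Connected)
    (h1 : ∀ v, gdeg G v = 1) (h1' : ∀ v, gdeg G' v = 1) :
    Nonempty (G ≃g G') := by
  obtain ⟨v0, p0, hne, hall, hadj⟩ := all_leaves_structure hc h1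
  obtain ⟨v0', p0', hne', hall', hadj'⟩ := all_leaves_structure hc' h1'
  classical
  let f : V → V' := fun a => if a = v0 then v0' else p0'
  let g : V' → V := fun a => if a = v0' then v0 else p0
  have hfv : f v0 = v0' := if_pos rfl
  have hfp : f p0 = p0' := if_neg (Ne.symm hne)
  have hgv : g v0' = v0 := if_pos rfl
  have hgp : g p0' = p0 := if_neg (Ne.symm hne')
  have hleft : Function.LeftInverse g f := by
    intro a
    rcases hall a with rfl | rfl
    · rw [hfv, hgv]
    · rw [hfp, hgp]
  have hright : Function.RightInverse g f := by
    intro a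
    rcases hall' a with rfl | rfl
    · rw [hgv, hfv]
    · rw [hgp, hfp]
  let e : V ≃ V' := ⟨f, g, hleft, hright⟩
  refine ⟨⟨e, ?_⟩⟩
  intro a b
  rw [hadj, hadj']
  simp only [ne_eq, not_iff_not]
  exact ⟨fun h => e.injective h, fun h => congrArg e h⟩

lemma forward_dir {V V' : Type*} {n : ℕ} {T : SimpleGraph V} {T' : SimpleGraph V'}
    (e : T ≃g T') :
    Nonempty (T.induce {v | gdeg T v = n} ≃g T'.induce {v | gdeg T' v = n}) := by
  refine ⟨⟨e.toEquiv.subtypeEquiv fun a => ?_, ?_⟩⟩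
  · simp only [Set.mem_setOf_eq]
    rw [show e.toEquiv a = e a from rfl, gdeg_map e a]
  · intro a b
    exact e.map_rel_iff

lemma backward_dir {V V' : Type*} [Fintype V] [Fintype V'] {n m : ℕ} (hn : 1 < n) (hm0 : 0 < m)
    {T : SimpleGraph V} {T' : SimpleGraph V'}
    (hc : T.Connected) (hc' : T'.Connected)
    (hbi : ∀ v, gdeg T v = 1 ∨ gdeg T v = n)
    (hbi' : ∀ v, gdeg T' v = 1 ∨ gdeg T' v = n)
    (hm : {v | gdeg T v = n}.ncard = m) (hm' : {v | gdeg T' v = n}.ncard = m)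
    (φ : T.induce {v | gdeg T v = n} ≃g T'.induce {v | gdeg T' v = n}) :
    Nonempty (T ≃g T') := by
  classical
  have hIne : {v | gdeg T v = n}.Nonempty := by
    rw [Set.nonempty_iff_ne_empty]
    intro h
    rw [h, Set.ncard_empty] at hm
    omega
  have hIne' : {v | gdeg T' v = n}.Nonempty := by
    rw [Set.nonempty_iff_ne_empty]
    intro h
    rw [h, Set.ncard_empty] at hm'
    omega
  -- parent functions
  have hparex : ∀ v : V, ∃ p, gdeg T v = 1 → T.neighborSet v = {p} := by
    intro v
    by_cases h : gdeg T v = 1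
    · obtain ⟨p, hp⟩ := Set.ncard_eq_one.mp h
      exact ⟨p, fun _ => hp⟩
    · exact ⟨v, fun h' => absurd h' h⟩
  choose par hpar using hparex
  have hparex' : ∀ v : V', ∃ p, gdeg T' v = 1 → T'.neighborSet v = {p} := by
    intro v
    by_cases h : gdeg T' v = 1
    · obtain ⟨p, hp⟩ := Set.ncard_eq_one.mp h
      exact ⟨p, fun _ => hp⟩
    · exact ⟨v, fun h' => absurd h' h⟩
  choose par' hpar' using hparex'
  have hparI : ∀ v, gdeg T v = 1 → gdeg T (par v) = n :=
    fun v h => leafPar_internal hn hc hbi (hpar v h) hIne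
  have hparI' : ∀ v, gdeg T' v = 1 → gdeg T' (par' v) = n :=
    fun v h => leafPar_internal hn hc' hbi' (hpar' v h) hIne'
  have hadjpar : ∀ v, gdeg T v = 1 → T.Adj (par v) v := by
    intro v h
    have : par v ∈ T.neighborSet v := by rw [hpar v h]; rfl
    exact this.symm
  have hadjpar' : ∀ v, gdeg T' v = 1 → T'.Adj (par' v) v := by
    intro v h
    have : par' v ∈ T'.neighborSet v := by rw [hpar' v h]; rfl
    exact this.symm
  have hadjiff : ∀ v, gdeg T v = 1 → ∀ x, (T.Adj x v ↔ x = par v) :=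
    fun v h x => adj_iff_of_nbr (hpar v h) x
  have hadjiff' : ∀ v, gdeg T' v = 1 → ∀ x, (T'.Adj x v ↔ x = par' v) :=
    fun v h x => adj_iff_of_nbr (hpar' v h) x
  -- leaf-neighbor sets
  set I := {v | gdeg T v = n} with hIdef
  set I' := {v | gdeg T' v = n} with hIdef'
  set LN : ↥I → Set V := fun u => {w | gdeg T w = 1 ∧ T.Adj ↑u w} with hLNdef
  set LN' : ↥I' → Set V' := fun u => {w | gdeg T' w = 1 ∧ T'.Adj ↑u w} with hLNdef'
  -- counting
  have hLNcard : ∀ u : ↥I, (LN u).ncard + gdeg (T.induce I) u = n := by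
    intro u
    have hsplit : T.neighborSet ↑u = {w | gdeg T w = n ∧ T.Adj ↑u w} ∪ LN u := by
      ext w
      simp only [SimpleGraph.mem_neighborSet, Set.mem_union, Set.mem_setOf_eq, hLNdef]
      constructor
      · intro h
        rcases hbi w with h1 | h1
        · right; exact ⟨h1, h⟩
        · left; exact ⟨h1, h⟩
      · rintro (⟨_, h⟩ | ⟨_, h⟩) <;> exact h
    have hdisj : Disjoint {w | gdeg T w = n ∧ T.Adj ↑u w} (LN u) := by
      rw [Set.disjoint_left]
      rintro w ⟨h1, _⟩ hw
      have h2 : gdeg T w = 1 := hw.1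
      omega
    have hcard : (T.neighborSet ↑u).ncard = n := u.2
    have hIN : {w | gdeg T w = n ∧ T.Adj ↑u w}.ncard = gdeg (T.induce I) u := by
      show _ = ((T.induce I).neighborSet u).ncard
      rw [← Nat.card_coe_set_eq, ← Nat.card_coe_set_eq]
      apply Nat.card_congr
      exact { toFun := fun x => ⟨⟨↑x, x.2.1⟩, x.2.2⟩
              invFun := fun y => ⟨↑(↑y : ↥I), ⟨(↑y : ↥I).2, y.2⟩⟩
              left_inv := fun x => rfl
              right_inv := fun y => rfl }
    have hu := Set.ncard_union_eq hdisj (Set.toFinite _) (Set.toFinite _)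
    rw [hsplit] at hcard
    rw [hcard] at hu
    omega
  have hLNcard' : ∀ u : ↥I', (LN' u).ncard + gdeg (T'.induce I') u = n := by
    intro u
    have hsplit : T'.neighborSet ↑u = {w | gdeg T' w = n ∧ T'.Adj ↑u w} ∪ LN' u := by
      ext w
      simp only [SimpleGraph.mem_neighborSet, Set.mem_union, Set.mem_setOf_eq, hLNdef']
      constructor
      · intro h
        rcases hbi' w with h1 | h1
        · right; exact ⟨h1, h⟩
        · left; exact ⟨h1, h⟩
      · rintro (⟨_, h⟩ | ⟨_, h⟩) <;> exact h
    have hdisj : Disjoint {w | gdeg T' w = n ∧ T'.Adj ↑u w} (LN' u) := by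
      rw [Set.disjoint_left]
      rintro w ⟨h1, _⟩ hw
      have h2 : gdeg T' w = 1 := hw.1
      omega
    have hcard : (T'.neighborSet ↑u).ncard = n := u.2
    have hIN : {w | gdeg T' w = n ∧ T'.Adj ↑u w}.ncard = gdeg (T'.induce I') u := by
      show _ = ((T'.induce I').neighborSet u).ncard
      rw [← Nat.card_coe_set_eq, ← Nat.card_coe_set_eq]
      apply Nat.card_congr
      exact { toFun := fun x => ⟨⟨↑x, x.2.1⟩, x.2.2⟩
              invFun := fun y => ⟨↑(↑y : ↥I'), ⟨(↑y : ↥I').2, y.2⟩⟩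
              left_inv := fun x => rfl
              right_inv := fun y => rfl }
    have hu := Set.ncard_union_eq hdisj (Set.toFinite _) (Set.toFinite _)
    rw [hsplit] at hcard
    rw [hcard] at hu
    omega
  -- matching leaf sets
  have hEq : ∀ u : ↥I, Nat.card ↥(LN u) = Nat.card ↥(LN' (φ u)) := by
    intro u
    rw [Nat.card_coe_set_eq, Nat.card_coe_set_eq]
    have h1 := hLNcard u
    have h2 := hLNcard' (φ u)
    have h3 : gdeg (T'.induce I') (φ u) = gdeg (T.induce I) u := gdeg_map φ u
    omega
  have E : ∀ u : ↥I, ↥(LN u) ≃ ↥(LN' (φ u)) := fun u => Classical.choice (Finite.card_eq.mp (hEq u))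
  -- the map
  set f : V → V' := fun v =>
    if h : gdeg T v = n then ↑(φ ⟨v, h⟩)
    else ↑(E ⟨par v, hparI v ((hbi v).resolve_right h)⟩
      ⟨v, ⟨(hbi v).resolve_right h, hadjpar v ((hbi v).resolve_right h)⟩⟩) with hfdef
  have hfN : ∀ v (h : gdeg T v = n), f v = ↑(φ ⟨v, h⟩) := fun v h => dif_pos h
  have hfL : ∀ v (h : gdeg T v = 1),
      f v = ↑(E ⟨par v, hparI v h⟩ ⟨v, ⟨h, hadjpar v h⟩⟩) := by
    intro v h
    have hne : ¬ gdeg T v = n := by omega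
    exact dif_neg hne
  have hfNdeg : ∀ v (h : gdeg T v = n), gdeg T' (f v) = n := by
    intro v h
    rw [hfN v h]
    exact (φ ⟨v, h⟩).2
  have hfLmem : ∀ v (h : gdeg T v = 1),
      gdeg T' (f v) = 1 ∧ T'.Adj ↑(φ ⟨par v, hparI v h⟩) (f v) := by
    intro v h
    rw [hfL v h]
    exact (E ⟨par v, hparI v h⟩ ⟨v, ⟨h, hadjpar v h⟩⟩).2
  -- congruence helpers for E
  have hEcast : ∀ (i j : ↥I) (hij : i = j) (x : ↥(LN i)) (y : ↥(LN j)),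
      (↑x : V) = ↑y → (↑(E i x) : V') = ↑(E j y) := by
    rintro i j rfl x y hxy
    exact congrArg Subtype.val (congrArg (E i) (Subtype.ext hxy))
  have hEinj : ∀ (i j : ↥I) (hij : i = j) (x : ↥(LN i)) (y : ↥(LN j)),
      (↑(E i x) : V') = ↑(E j y) → (↑x : V) = ↑y := by
    rintro i j rfl x y h
    exact congrArg Subtype.val ((E i).injective (Subtype.ext h))
  -- injectivity
  have hinj : Function.Injective f := by
    intro a b hab
    rcases hbi a with ha | ha <;> rcases hbi b with hb | hb
    · -- both leaves
      have h1 := hfLmem a ha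
      have h2 := hfLmem b hb
      have e1 : ↑(φ ⟨par a, hparI a ha⟩) = par' (f a) := (hadjiff' (f a) h1.1 _).mp h1.2
      have e2 : ↑(φ ⟨par b, hparI b hb⟩) = par' (f a) := by
        rw [hab]
        exact (hadjiff' (f b) h2.1 _).mp h2.2
      have e3 : (⟨par a, hparI a ha⟩ : ↥I) = ⟨par b, hparI b hb⟩ :=
        φ.toEquiv.injective (Subtype.ext (e1.trans e2.symm))
      have hab' := hab
      rw [hfL a ha, hfL b hb] at hab'
      exact hEinj _ _ e3 _ _ hab'
    · have d1 := (hfLmem a ha).1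
      have d2 := hfNdeg b hb
      rw [hab] at d1
      omega
    · have d1 := hfNdeg a ha
      have d2 := (hfLmem b hb).1
      rw [hab] at d1
      omega
    · rw [hfN a ha, hfN b hb] at hab
      have := φ.toEquiv.injective (Subtype.ext hab)
      exact congrArg Subtype.val this
  -- surjectivity
  have hsurj : Function.Surjective f := by
    intro w
    rcases hbi' w with hw | hw
    · -- leaf case
      have hpw : par' w ∈ I' := hparI' w hw
      have hφu : φ (φ.symm ⟨par' w, hpw⟩) = ⟨par' w, hpw⟩ := φ.apply_symm_apply _
      have hwmem : w ∈ LN' (φ (φ.symm ⟨par' w, hpw⟩)) := by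
        refine ⟨hw, ?_⟩
        rw [hφu]
        exact hadjpar' w hw
      set u : ↥I := φ.symm ⟨par' w, hpw⟩ with hudef
      set x : ↥(LN u) := (E u).symm ⟨w, hwmem⟩ with hxdef
      refine ⟨↑x, ?_⟩
      have hx1 : gdeg T ↑x = 1 := x.2.1
      have hxadj : T.Adj ↑u ↑x := x.2.2
      have hxpar : par ↑x = ↑u := ((hadjiff ↑x hx1 ↑u).mp hxadj).symm
      rw [hfL ↑x hx1]
      have hidx : (⟨par ↑x, hparI ↑x hx1⟩ : ↥I) = u := Subtype.ext hxpar
      have := hEcast _ _ hidx ⟨↑x, ⟨hx1, hadjpar ↑x hx1⟩⟩ x rfl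
      rw [this, hxdef]
      exact congrArg Subtype.val ((E u).apply_symm_apply ⟨w, hwmem⟩)
    · refine ⟨↑(φ.symm ⟨w, hw⟩), ?_⟩
      rw [hfN _ (φ.symm ⟨w, hw⟩).2]
      exact congrArg Subtype.val (φ.apply_symm_apply ⟨w, hw⟩)
  -- adjacency
  have key : ∀ a b, gdeg T b = 1 → (T.Adj a b ↔ T'.Adj (f a) (f b)) := by
    intro a b hb
    have h2 := hfLmem b hb
    rw [hadjiff b hb a, hadjiff' (f b) h2.1 (f a)]
    have hp : par' (f b) = ↑(φ ⟨par b, hparI b hb⟩) := ((hadjiff' (f b) h2.1 _).mp h2.2).symm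
    rw [hp]
    rcases hbi a with ha | ha
    · constructor
      · intro h
        exfalso
        have := hparI b hb
        rw [← h] at this
        omega
      · intro h
        exfalso
        have d1 := (hfLmem a ha).1
        rw [h] at d1
        have d2 : gdeg T' ↑(φ ⟨par b, hparI b hb⟩) = n := (φ ⟨par b, hparI b hb⟩).2
        omega
    · rw [hfN a ha]
      constructor
      · intro h
        exact congrArg Subtype.val (congrArg φ (Subtype.ext h))
      · intro h
        have := φ.toEquiv.injective (Subtype.ext h)
        exact congrArg Subtype.val this
  have hadjf : ∀ a b, T.Adj a b ↔ T'.Adj (f a) (f b) := by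
    intro a b
    rcases hbi b with hb | hb
    · exact key a b hb
    · rcases hbi a with ha | ha
      · rw [adj_comm, adj_comm T']
        exact key b a ha
      · rw [hfN a ha, hfN b hb]
        exact (φ.map_rel_iff (a := ⟨a, ha⟩) (b := ⟨b, hb⟩)).symm
  exact ⟨⟨Equiv.ofBijective f ⟨hinj, hsurj⟩, fun {a b} => (hadjf a b).symm⟩⟩

/-- Two bi-valent trees `T, T'` in `Bi(m, n)` are isomorphic as graphs if
and only if their internal subtrees (the induced subgraphs on the internal vertices)
are isomorphic as graphs. -/
theorem stmt_4 {V V' : Type*} [Fintype V] [Fintype V'] {n m : ℕ} (hn : 1 < n)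
    (T : SimpleGraph V) (T' : SimpleGraph V')
    (hT : T.IsTree) (hT' : T'.IsTree)
    (hbi : ∀ v, gdeg T v = 1 ∨ gdeg T v = n)
    (hbi' : ∀ v, gdeg T' v = 1 ∨ gdeg T' v = n)
    (hm : {v | gdeg T v = n}.ncard = m) (hm' : {v | gdeg T' v = n}.ncard = m) :
    Nonempty (T ≃g T') ↔
      Nonempty (T.induce {v | gdeg T v = n} ≃g T'.induce {v | gdeg T' v = n}) := by
  constructor
  · rintro ⟨e⟩
    exact forward_dir e
  · rintro ⟨φ⟩
    rcases Nat.eq_zero_or_pos m with rfl | hm0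
    · have hemp : {v | gdeg T v = n} = ∅ := (Set.ncard_eq_zero (Set.toFinite _)).mp hm
      have hemp' : {v | gdeg T' v = n} = ∅ := (Set.ncard_eq_zero (Set.toFinite _)).mp hm'
      have hall : ∀ v, gdeg T v = 1 := by
        intro v
        rcases hbi v with h | h
        · exact h
        · exfalso
          have hv : v ∈ {v | gdeg T v = n} := h
          rw [hemp] at hv
          exact hv
      have hall' : ∀ v, gdeg T' v = 1 := by
        intro v
        rcases hbi' v with h | h
        · exact h
        · exfalso
          have hv : v ∈ {v | gdeg T' v = n} := h
          rw [hemp'] at hv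
          exact hv
      exact iso_of_all_leaves hT.isConnected hT'.isConnected hall hall'
    · exact backward_dir hn hm0 hT.isConnected hT'.isConnected hbi hbi' hm hm' φ
end

section
/- Let T be a bi-valent tree with valence set {1,n} having at least one internal vertex, and let Aut_e be the kernel of the restriction homomorphism Aut(T) → Aut(T_i). For each external vertex v let m(v) = |Two(v)|, for 1 ≤ i ≤ n let V_e^{(i)} = { v ∈ V_e : m(v) = i }, and let r(i) = max{ |S| : S ⊆ V_e^{(i)} and d(v,w) ≠ 2 for all v, w ∈ S }. Then there is a (non-canonical) group isomorphism Aut_e ≅ ∏_{i=1}^{n} (S_i)^{r(i)}, where S_i denotes the symmetric group on i letters. -/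
open SimpleGraph

/-- `Aut_e`: the kernel of the restriction homomorphism `Aut(T) → Aut(T_i)`, realized as the
subgroup of automorphisms of `T` fixing every internal vertex (vertex of degree `n`). -/
def autE {V : Type*} (T : SimpleGraph V) (n : ℕ) : Subgroup (Equiv.Perm V) where
  carrier := {σ | (∀ u v, T.Adj (σ u) (σ v) ↔ T.Adj u v) ∧ ∀ v, gdeg T v = n → σ v = v}
  one_mem' := by
    refine ⟨fun u v => ?_, fun v _ => rfl⟩
    simp
  mul_mem' := by
    rintro a b ⟨ha1, ha2⟩ ⟨hb1, hb2⟩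
    refine ⟨fun u v => ?_, fun v hv => ?_⟩
    · rw [Equiv.Perm.mul_apply, Equiv.Perm.mul_apply, ha1, hb1]
    · rw [Equiv.Perm.mul_apply, hb2 v hv, ha2 v hv]
  inv_mem' := by
    rintro σ ⟨h1, h2⟩
    refine ⟨fun u v => ?_, fun v hv => ?_⟩
    · conv_rhs => rw [← (show σ (σ⁻¹ u) = u by simp), ← (show σ (σ⁻¹ v) = v by simp)]
      exact (h1 _ _).symm
    · conv_lhs => rw [← h2 v hv]
      exact (show σ⁻¹ (σ v) = v by simp)

/-- `m(v) = |Two(v)|`: the number of external vertices at distance at most `2` from `v`. -/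
noncomputable def mVal {V : Type*} (T : SimpleGraph V) (v : V) : ℕ :=
  {u | gdeg T u = 1 ∧ T.dist v u ≤ 2}.ncard

/-- `r(i)`: the maximal cardinality of a set `S ⊆ V_e^{(i)}` with `d(v,w) ≠ 2` for all
`v, w ∈ S`, where `V_e^{(i)} = {v ∈ V_e | m(v) = i}`. -/
noncomputable def rVal {V : Type*} (T : SimpleGraph V) (i : ℕ) : ℕ :=
  sSup {k | ∃ s : Set V, (∀ v ∈ s, gdeg T v = 1 ∧ mVal T v = i) ∧
    (∀ v ∈ s, ∀ w ∈ s, T.dist v w ≠ 2) ∧ s.ncard = k}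

/-!
An automorphism fixing every internal vertex can only permute leaves among themselves, and it must
keep each leaf attached to its unique neighbour. Hence `Aut_e` is the group of permutations of the
leaves preserving the fibres of the parent map, i.e. the product over internal vertices `w` of the
symmetric groups on the leaves at `w`. Two leaves lie at distance `2` exactly when they are distinct
with a common parent, so `m(v)` is the number of leaves at the parent of `v`, and a largest set in
the definition of `r(i)` picks one leaf at each vertex carrying exactly `i` leaves. Grouping the
factors by the number of leaves gives `∏ i, (S_i)^{r(i)}`.
-/

open Equiv

namespace Equiv.Perm

variable {α ι : Type*}

def fiberwise (f : α → ι) : Subgroup (Perm α) where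
  carrier := {σ | ∀ a, f (σ a) = f a}
  one_mem' _ := rfl
  mul_mem' hσ hτ a := (hσ _).trans (hτ a)
  inv_mem' {σ} hσ a := by simpa using (hσ (σ⁻¹ a)).symm

def fiberwiseMulEquiv (f : α → ι) : fiberwise f ≃* ∀ i, Perm {a // f a = i} where
  toFun σ i := (σ : Perm α).subtypePerm fun a => by rw [σ.2 a]
  invFun g := ⟨(sigmaFiberEquiv f).permCongr (sigmaCongrRight g), fun a => (g (f a) ⟨a, rfl⟩).2⟩
  left_inv σ := by ext a; simp [sigmaFiberEquiv]
  right_inv g := by ext i ⟨a, rfl⟩; simp [sigmaFiberEquiv]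
  map_mul' σ τ := by ext; rfl

section ByCard

variable (β : ι → Type*) [∀ i, Finite (β i)] {n : ℕ}

/-- Factors with `Nat.card (β i) = 0` are trivial groups and disappear. -/
noncomputable def piMulEquivByCard (hβ : ∀ i, Nat.card (β i) ≤ n) :
    (∀ i, Perm (β i)) ≃* ∀ k : Fin n, ∀ i : {i // Nat.card (β i) = k + 1}, Perm (β i) where
  toFun g _ i := g i
  invFun h i := if hi : Nat.card (β i) = 0 then 1 else
    h ⟨Nat.card (β i) - 1, by have := hβ i; omega⟩ ⟨i, by dsimp only; omega⟩
  left_inv g := by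
    funext i
    dsimp only
    split_ifs with hi
    · have : IsEmpty (β i) := Finite.card_eq_zero_iff.mp hi
      exact Subsingleton.elim _ _
    · rfl
  right_inv h := by
    funext k ⟨i, hi⟩
    have hk : ∀ (l : Fin n) (hl : Nat.card (β i) = l + 1), l = k → h l ⟨i, hl⟩ = h k ⟨i, hi⟩ := by
      rintro l hl rfl
      rfl
    simp only [dif_neg (show Nat.card (β i) ≠ 0 by omega)]
    exact hk _ _ (Fin.ext (by dsimp only; omega))
  map_mul' _ _ := rfl

noncomputable def piMulEquivPiFinByCard (hβ : ∀ i, Nat.card (β i) ≤ n) :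
    (∀ i, Perm (β i)) ≃* ∀ k : Fin n, {i // Nat.card (β i) = k + 1} → Perm (Fin (k + 1)) :=
  (piMulEquivByCard β hβ).trans <|
    MulEquiv.piCongrRight fun _ => MulEquiv.piCongrRight fun i =>
      (Finite.equivFinOfCardEq i.2).permCongrHom

end ByCard

end Equiv.Perm

lemma gdeg_iso {V W : Type*} {G : SimpleGraph V} {G' : SimpleGraph W} (e : G ≃g G') (v : V) :
    gdeg G' (e v) = gdeg G v := by
  simp only [gdeg, ← Nat.card_coe_set_eq]
  exact Nat.card_congr (e.mapNeighborSet v).symm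

lemma gdeg_apply_of_mem_autE {V : Type*} {T : SimpleGraph V} {n : ℕ} {σ : Perm V}
    (hσ : σ ∈ autE T n) (v : V) : gdeg T (σ v) = gdeg T v :=
  gdeg_iso (⟨σ, hσ.1 _ _⟩ : T ≃g T) v

namespace BivalentTree

variable {V : Type*} {T : SimpleGraph V}

variable (T) in
abbrev Leaf := {v // gdeg T v = 1}

noncomputable def leafParent (v : Leaf T) : V :=
  (Set.ncard_eq_one.mp v.2).choose

lemma neighborSet_leaf (v : Leaf T) : T.neighborSet v = {leafParent v} :=
  (Set.ncard_eq_one.mp v.2).choose_spec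

lemma adj_leaf_iff (v : Leaf T) {u : V} : T.Adj v u ↔ u = leafParent v := by
  rw [← mem_neighborSet, neighborSet_leaf, Set.mem_singleton_iff]

lemma adj_leafParent (v : Leaf T) : T.Adj v (leafParent v) :=
  (adj_leaf_iff v).mpr rfl

lemma leafParent_eq_of_adj {v : Leaf T} {w : V} (h : T.Adj w v) : leafParent v = w :=
  ((adj_leaf_iff v).mp h.symm).symm

lemma card_fiber_leafParent_le_gdeg [Finite V] (w : V) :
    Nat.card {u : Leaf T // leafParent u = w} ≤ gdeg T w := by
  rw [gdeg, ← Nat.card_coe_set_eq]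
  refine Nat.card_le_card_of_injective (fun u => ⟨u.1, ?_⟩) fun u u' h => ?_
  · exact ((adj_leaf_iff u.1).mpr u.2.symm).symm
  · exact Subtype.ext (Subtype.ext (congrArg (fun x : T.neighborSet w => (x : V)) h))

section Connected

variable (hconn : T.Connected) (hint : ∃ w, gdeg T w ≠ 1)
include hconn hint

/-- The two ends of an edge between leaves form a whole connected component. -/
lemma not_adj_leaves (u v : Leaf T) : ¬ T.Adj u v := by
  intro huv
  have hclosed : ∀ {a b : V}, T.Adj a b → a = u ∨ a = v → b = u ∨ b = v := by
    rintro a b hab (rfl | rfl)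
    · exact .inr (((adj_leaf_iff u).mp hab).trans ((adj_leaf_iff u).mp huv).symm)
    · exact .inl (((adj_leaf_iff v).mp hab).trans ((adj_leaf_iff v).mp huv.symm).symm)
  have hwalk : ∀ {a b : V} (p : T.Walk a b), a = u ∨ a = v → b = u ∨ b = v := by
    intro a b p
    induction p with
    | nil => exact id
    | cons h _ ih => exact fun ha => ih (hclosed h ha)
  obtain ⟨w, hw⟩ := hint
  rcases hwalk (hconn.preconnected u w).some (.inl rfl) with rfl | rfl
  exacts [hw u.2, hw v.2]

lemma dist_leaves_eq_two_iff (u v : Leaf T) :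
    T.dist u v = 2 ↔ u ≠ v ∧ leafParent u = leafParent v := by
  rw [SimpleGraph.dist, ENat.toNat_eq_iff two_ne_zero, Nat.cast_ofNat, edist_eq_two_iff]
  simp only [Set.Nonempty, mem_commonNeighbors, adj_leaf_iff, ne_eq, Subtype.val_inj,
    not_adj_leaves hconn hint u v, not_false_eq_true, true_and]
  exact and_congr_right fun _ => ⟨fun ⟨_, hu, hv⟩ => hu.symm.trans hv, fun h => ⟨_, rfl, h⟩⟩

lemma dist_leaves_le_two_iff (u v : Leaf T) :
    T.dist u v ≤ 2 ↔ leafParent u = leafParent v := by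
  have h1 : T.dist u v ≠ 1 := fun h => not_adj_leaves hconn hint u v (dist_eq_one_iff_adj.mp h)
  have h0 : T.dist u v = 0 ↔ u = v := hconn.dist_eq_zero_iff.trans Subtype.val_inj
  have h2 := dist_leaves_eq_two_iff hconn hint u v
  constructor
  · intro h
    rcases (show T.dist u v = 0 ∨ T.dist u v = 2 by omega) with h | h
    exacts [congrArg leafParent (h0.mp h), (h2.mp h).2]
  · intro h
    by_cases huv : u = v
    · exact (h0.mpr huv).trans_le zero_le_two
    · exact (h2.mpr ⟨huv, h⟩).le

lemma mVal_eq_card (v : Leaf T) :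
    mVal T v = Nat.card {u : Leaf T // leafParent u = leafParent v} := by
  rw [mVal, ← Nat.card_coe_set_eq]
  refine Nat.card_congr ((subtypeSubtypeEquivSubtypeInter _ _).symm.trans
    (subtypeEquivRight fun u => ?_))
  rw [dist_leaves_le_two_iff hconn hint v u, eq_comm]

lemma rVal_eq_card [Finite V] {k : ℕ} (hk : 0 < k) :
    rVal T k = Nat.card {w // Nat.card {u : Leaf T // leafParent u = w} = k} := by
  refine IsGreatest.csSup_eq ⟨?_, ?_⟩
  · have hne (w : {w // Nat.card {u : Leaf T // leafParent u = w} = k}) :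
        Nonempty {u : Leaf T // leafParent u = w} :=
      (Nat.card_pos_iff.mp (w.2.symm ▸ hk)).1
    let ℓ w : Leaf T := (hne w).some.1
    have hℓ w : leafParent (ℓ w) = w := (hne w).some.2
    have hinj : Function.Injective fun w => (ℓ w : V) := fun w w' h =>
      Subtype.ext ((hℓ w).symm.trans ((congrArg leafParent (Subtype.ext h)).trans (hℓ w')))
    refine ⟨Set.range fun w => (ℓ w : V), ?_, ?_, Set.ncard_range_of_injective hinj⟩
    · rintro _ ⟨w, rfl⟩
      exact ⟨(ℓ w).2, by rw [mVal_eq_card hconn hint, hℓ, w.2]⟩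
    · rintro _ ⟨w, rfl⟩ _ ⟨w', rfl⟩ h
      obtain ⟨hne, hpar⟩ := (dist_leaves_eq_two_iff hconn hint _ _).mp h
      rw [hℓ, hℓ] at hpar
      exact hne (by rw [Subtype.ext hpar])
  · rintro _ ⟨s, hs, hdist, rfl⟩
    rw [← Nat.card_coe_set_eq]
    refine Nat.card_le_card_of_injective
      (fun v => ⟨leafParent ⟨v, (hs v v.2).1⟩, ?_⟩) fun v v' h => ?_
    · rw [← mVal_eq_card hconn hint, (hs v v.2).2]
    · by_contra hne
      refine hdist v v.2 v' v'.2 ((dist_leaves_eq_two_iff hconn hint ⟨v, _⟩ ⟨v', _⟩).mpr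
        ⟨fun h' => hne (Subtype.ext (congrArg (fun x : Leaf T => (x : V)) h')),
          congrArg Subtype.val h⟩)

variable {n : ℕ}

lemma gdeg_leafParent (hbi : ∀ v, gdeg T v = 1 ∨ gdeg T v = n) (v : Leaf T) :
    gdeg T (leafParent v) = n :=
  (hbi _).resolve_left fun h => not_adj_leaves hconn hint v ⟨_, h⟩ (adj_leafParent v)

lemma adj_apply_leafParent (hbi : ∀ v, gdeg T v = 1 ∨ gdeg T v = n) {σ : Perm V}
    (hσ : σ ∈ autE T n) (v : Leaf T) : T.Adj (σ v) (leafParent v) := by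
  have h := (hσ.1 v (leafParent v)).mpr (adj_leafParent v)
  rwa [hσ.2 _ (gdeg_leafParent hconn hint hbi v)] at h

lemma ofSubtype_mem_autE (hn : n ≠ 1) {τ : Perm (Leaf T)}
    (hτ : τ ∈ Perm.fiberwise leafParent) : Perm.ofSubtype τ ∈ autE T n := by
  refine ⟨fun u v => ?_, fun v hv => Perm.ofSubtype_apply_of_not_mem τ (hv.symm ▸ hn)⟩
  have hleaf (u : Leaf T) (v : V) :
      T.Adj (Perm.ofSubtype τ u) (Perm.ofSubtype τ v) ↔ T.Adj u v := by
    rw [Perm.ofSubtype_apply_coe]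
    by_cases hv : gdeg T v = 1
    · rw [show v = (⟨v, hv⟩ : Leaf T) from rfl, Perm.ofSubtype_apply_coe]
      exact iff_of_false (not_adj_leaves hconn hint _ _) (not_adj_leaves hconn hint _ _)
    · rw [Perm.ofSubtype_apply_of_not_mem τ hv, adj_leaf_iff, adj_leaf_iff, hτ u]
  by_cases hu : gdeg T u = 1
  · exact hleaf ⟨u, hu⟩ v
  by_cases hv : gdeg T v = 1
  · rw [T.adj_comm, T.adj_comm u]
    exact hleaf ⟨v, hv⟩ u
  · rw [Perm.ofSubtype_apply_of_not_mem τ hu, Perm.ofSubtype_apply_of_not_mem τ hv]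

noncomputable def autEMulEquivFiberwise (hn : n ≠ 1) (hbi : ∀ v, gdeg T v = 1 ∨ gdeg T v = n) :
    autE T n ≃* Perm.fiberwise (leafParent (T := T)) where
  toFun σ := ⟨(σ : Perm V).subtypePerm fun v => by rw [gdeg_apply_of_mem_autE σ.2],
    fun v => leafParent_eq_of_adj (adj_apply_leafParent hconn hint hbi σ.2 v).symm⟩
  invFun τ := ⟨Perm.ofSubtype τ, ofSubtype_mem_autE hconn hint hn τ.2⟩
  left_inv σ := by
    apply Subtype.ext
    dsimp only
    exact Perm.ofSubtype_subtypePerm _ fun v hv => (hbi v).resolve_right fun h => hv (σ.2.2 v h)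
  right_inv τ := by
    apply Subtype.ext
    dsimp only
    exact Perm.subtypePerm_ofSubtype τ.1
  map_mul' _ _ := rfl

end Connected

end BivalentTree

open BivalentTree in
/-- For a bi-valent tree `T` with valence set `{1, n}` having at least one
internal vertex, there is a (non-canonical) group isomorphism
`Aut_e ≅ ∏_{i = 1}^{n} (S_i)^{r(i)}`. -/
theorem stmt_5 {V : Type*} [Fintype V] {n : ℕ} (hn : 1 < n)
    (T : SimpleGraph V) (hT : T.IsTree)
    (hbi : ∀ v, gdeg T v = 1 ∨ gdeg T v = n)
    (hint : ∃ v, gdeg T v = n) :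
    Nonempty (autE T n ≃*
      ∀ i : Fin n, Fin (rVal T ((i : ℕ) + 1)) → Equiv.Perm (Fin ((i : ℕ) + 1))) := by
  have hconn := hT.connected
  have hint' : ∃ w, gdeg T w ≠ 1 := hint.imp fun _ hw => by omega
  have hcard (w : V) : Nat.card {u : Leaf T // leafParent u = w} ≤ n :=
    (card_fiber_leafParent_le_gdeg w).trans ((hbi w).elim (fun h => h ▸ hn.le) le_of_eq)
  exact ⟨(autEMulEquivFiberwise hconn hint' hn.ne' hbi).trans <|
    (Perm.fiberwiseMulEquiv _).trans <| (Perm.piMulEquivPiFinByCard _ hcard).trans <|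
    MulEquiv.piCongrRight fun i => MulEquiv.arrowCongr
      (Finite.equivFinOfCardEq (rVal_eq_card hconn hint' i.val.succ_pos).symm) (MulEquiv.refl _)⟩
end

section
/- Let T be a bi-valent tree with valence set {1,n} equipped with an orientation, and let v be an external vertex of T. Then there exists a unique external vertex w of T and a unique reduced well-oriented path from v to w; that is, there is exactly one external vertex w such that the (unique) simple path v = v_0, v_1, …, v_k = w in T satisfies σ_{v_i}(v_{i-1}) = v_{i+1} for every internal vertex v_i on the path. -/
open SimpleGraph

namespace Stmt8Aux

variable {V : Type*} {G : SimpleGraph V}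

/-- Two walks with same endpoints, lengths and vertices are equal. -/
lemma walk_eq_of_getVert : ∀ {u w : V} (p q : G.Walk u w), p.length = q.length →
    (∀ i, p.getVert i = q.getVert i) → p = q
  | _, _, .nil, .nil, _, _ => rfl
  | _, _, .nil, .cons _ _, hl, _ => by simp [SimpleGraph.Walk.length_cons] at hl
  | _, _, .cons _ _, .nil, hl, _ => by simp [SimpleGraph.Walk.length_cons] at hl
  | u, w, .cons (v := a) h p, .cons (v := b) h' q, hl, hg => by
    have hab : a = b := by
      have := hg 1
      simpa [SimpleGraph.Walk.getVert_cons] using this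
    subst hab
    have : p = q := walk_eq_of_getVert p q (by simpa using hl) (fun i => by simpa using hg (i+1))
    rw [this]

/-- In a path the vertex function is injective on `[0, length]`. -/
lemma isPath_getVert_inj : ∀ {u w : V} (p : G.Walk u w), p.IsPath →
    ∀ i j, i ≤ p.length → j ≤ p.length → p.getVert i = p.getVert j → i = j := by
  intro u w p
  induction p with
  | nil => intro _ i j hi hj _; simp at hi hj; omega
  | @cons u a w h p ih =>
    intro hp i j hi hj hij
    have hp' : p.IsPath := hp.of_cons
    have hu : u ∉ p.support := by
      have := hp.support_nodup
      exact (by simpa using this : _ ∧ _).1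
    match i, j with
    | 0, 0 => rfl
    | 0, (m+1) =>
      exfalso
      apply hu
      rw [SimpleGraph.Walk.mem_support_iff_exists_getVert]
      refine ⟨m, ?_, ?_⟩
      · have := hij.symm
        simpa using this
      · simpa [SimpleGraph.Walk.length_cons] using hj
    | (m+1), 0 =>
      exfalso
      apply hu
      rw [SimpleGraph.Walk.mem_support_iff_exists_getVert]
      refine ⟨m, ?_, ?_⟩
      · simpa using hij
      · simpa [SimpleGraph.Walk.length_cons] using hi
    | (m+1), (l+1) =>
      have := ih hp' m l (by simpa [SimpleGraph.Walk.length_cons] using hi)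
        (by simpa [SimpleGraph.Walk.length_cons] using hj) (by simpa using hij)
      omega

end Stmt8Aux

namespace Stmt8Aux

variable {V : Type*} {G : SimpleGraph V}

/-- In a tree the distance equals the length of any path. -/
lemma dist_eq_length (hT : G.IsTree) {u w : V} {p : G.Walk u w} (hp : p.IsPath) :
    G.dist u w = p.length := by
  classical
  obtain ⟨q, hq⟩ := (hT.isConnected u w).exists_walk_length_eq_dist
  have hqq : q.bypass.IsPath := q.bypass_isPath
  have : (⟨q.bypass, hqq⟩ : G.Path u w) = ⟨p, hp⟩ := hT.IsAcyclic.path_unique _ _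
  have hlen : q.bypass.length = p.length :=
    congrArg (fun P : G.Path u w => P.1.length) this
  have h1 : G.dist u w ≤ p.length := by
    rw [← hlen]; exact SimpleGraph.dist_le _
  have h2 : p.length ≤ G.dist u w := by
    rw [← hq, ← hlen]; exact q.length_bypass_le
  omega

/-- Adjacent vertices in a tree have distances from a base point differing by exactly one. -/
lemma dist_adj (hT : G.IsTree) (v0 : V) {u x : V} (h : G.Adj u x) :
    G.dist v0 u = G.dist v0 x + 1 ∨ G.dist v0 x = G.dist v0 u + 1 := by
  classical
  obtain ⟨Q, hQ⟩ := (hT.isConnected v0 x).exists_walk_length_eq_dist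
  have hQP : Q.bypass.IsPath := Q.bypass_isPath
  have hQlen : Q.bypass.length = G.dist v0 x := by
    have := (dist_eq_length hT hQP).symm
    exact this
  by_cases hu : u ∈ Q.bypass.support
  · right
    -- Q.bypass = take ++ drop ; drop : u → x is a path, equals the single edge
    have htake : (Q.bypass.takeUntil u hu).IsPath := hQP.takeUntil hu
    have hdrop : (Q.bypass.dropUntil u hu).IsPath := hQP.dropUntil hu
    have huniq : (⟨Q.bypass.dropUntil u hu, hdrop⟩ : G.Path u x) = SimpleGraph.Path.singleton h :=
      hT.IsAcyclic.path_unique _ _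
    have hdl : (Q.bypass.dropUntil u hu).length = 1 := by
      have := congrArg (fun (P : G.Path u x) => P.1.length) huniq
      simpa [SimpleGraph.Path.singleton] using this
    have htl : G.dist v0 u = (Q.bypass.takeUntil u hu).length := dist_eq_length hT htake
    have hsplit : (Q.bypass.takeUntil u hu).length + (Q.bypass.dropUntil u hu).length
        = Q.bypass.length := by
      rw [← SimpleGraph.Walk.length_append, SimpleGraph.Walk.take_spec]
    omega
  · left
    have hconcat : (Q.bypass.concat h.symm).IsPath := by
      rw [SimpleGraph.Walk.isPath_def, SimpleGraph.Walk.support_concat]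
      exact List.Nodup.append hQP.support_nodup (by simp) (by simpa using fun hx => hu hx)
    have := dist_eq_length hT hconcat
    rw [SimpleGraph.Walk.length_concat, hQlen] at this
    exact this

end Stmt8Aux

namespace Stmt8Aux

variable {V : Type*} {G : SimpleGraph V}

/-- In a tree, the neighbor of `u` that is closer to a base point `v0` is unique. -/
lemma closer_unique (hT : G.IsTree) (v0 : V) {u x y : V} (hx : G.Adj u x) (hy : G.Adj u y)
    (hdx : G.dist v0 x + 1 = G.dist v0 u) (hdy : G.dist v0 y + 1 = G.dist v0 u) : x = y := by
  classical
  have key : ∀ {z : V} (hz : G.Adj u z), G.dist v0 z + 1 = G.dist v0 u →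
      ∃ (p : G.Walk v0 z) (hp : (p.concat hz.symm).IsPath), True := by
    intro z hz hdz
    obtain ⟨Q, hQ⟩ := (hT.isConnected v0 z).exists_walk_length_eq_dist
    have hQP : Q.bypass.IsPath := Q.bypass_isPath
    have hQlen : Q.bypass.length = G.dist v0 z := (dist_eq_length hT hQP).symm
    have hu : u ∉ Q.bypass.support := by
      intro hmem
      obtain ⟨m, hm, hmle⟩ := SimpleGraph.Walk.mem_support_iff_exists_getVert.mp hmem
      -- u on a path from v0 to z: dist v0 u ≤ m ≤ length = dist v0 z < dist v0 u
      have htake : (Q.bypass.takeUntil u hmem).IsPath := hQP.takeUntil hmem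
      have h1 : G.dist v0 u = (Q.bypass.takeUntil u hmem).length := dist_eq_length hT htake
      have h2 : (Q.bypass.takeUntil u hmem).length ≤ Q.bypass.length :=
        SimpleGraph.Walk.length_takeUntil_le _ _
      omega
    refine ⟨Q.bypass, ?_, trivial⟩
    rw [SimpleGraph.Walk.isPath_def, SimpleGraph.Walk.support_concat]
    exact List.Nodup.append hQP.support_nodup (by simp) (by simpa using fun hx => hu hx)
  obtain ⟨px, hpx, -⟩ := key hx hdx
  obtain ⟨py, hpy, -⟩ := key hy hdy
  have : (⟨px.concat hx.symm, hpx⟩ : G.Path v0 u) = ⟨py.concat hy.symm, hpy⟩ :=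
    hT.IsAcyclic.path_unique _ _
  have heq : px.concat hx.symm = py.concat hy.symm := congrArg Subtype.val this
  obtain ⟨hv, -⟩ := SimpleGraph.Walk.concat_inj heq
  exact hv

end Stmt8Aux

namespace Stmt8Aux

variable {V : Type*} {G : SimpleGraph V}

/-- Build a walk from a vertex sequence. -/
def walkOfFun : ∀ (k : ℕ) (g : ℕ → V), (∀ i, i < k → G.Adj (g i) (g (i+1))) → G.Walk (g 0) (g k)
  | 0, _, _ => .nil
  | (k+1), g, h => .cons (h 0 (Nat.succ_pos _))
      (walkOfFun k (fun i => g (i+1)) (fun i hi => h (i+1) (by omega)))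

@[simp] lemma walkOfFun_length : ∀ (k : ℕ) (g : ℕ → V) h,
    (walkOfFun (G := G) k g h).length = k
  | 0, _, _ => rfl
  | (k+1), g, h => by
    simp [walkOfFun, walkOfFun_length]

lemma walkOfFun_getVert : ∀ (k : ℕ) (g : ℕ → V) h (i : ℕ), i ≤ k →
    (walkOfFun (G := G) k g h).getVert i = g i
  | 0, _, _, 0, _ => rfl
  | (k+1), g, h, 0, _ => by simp [walkOfFun]
  | (k+1), g, h, (i+1), hi => by
    rw [walkOfFun, SimpleGraph.Walk.getVert_cons_succ]
    exact walkOfFun_getVert k _ _ i (by omega)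

lemma walkOfFun_support : ∀ (k : ℕ) (g : ℕ → V) h,
    (walkOfFun (G := G) k g h).support = (List.range (k+1)).map g
  | 0, _, _ => rfl
  | (k+1), g, h => by
    rw [walkOfFun, SimpleGraph.Walk.support_cons, walkOfFun_support,
      List.range_succ_eq_map (n := k+1), List.range_succ_eq_map (n := k)]
    simp [List.map_map, Function.comp]

end Stmt8Aux
open Stmt8Aux

/-- Let `T` be a bi-valent tree with valence set `{1, n}` equipped with an
orientation, i.e. for each internal vertex `v` an `n`-cycle permutation `σ_v = ori v` of the
`n` vertices adjacent to `v` (encoded as a permutation of all vertices fixing every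
non-neighbor of `v` and acting as a single cycle on the neighbors of `v`). Then for every
external vertex `v` there is a unique external vertex `w` together with a unique reduced
(simple, non-trivial) well-oriented path from `v` to `w`: the path `v = v_0, v_1, …, v_k = w`
satisfies `σ_{v_i} (v_{i-1}) = v_{i+1}` for every interior vertex `v_i` of the path. -/
theorem stmt_8 {V : Type*} [Fintype V] {n : ℕ} (hn : 1 < n)
    (T : SimpleGraph V) (hT : T.IsTree)
    (hbi : ∀ v, gdeg T v = 1 ∨ gdeg T v = n)
    (ori : V → Equiv.Perm V)
    (hfix : ∀ v, gdeg T v = n → ∀ u, ¬ T.Adj v u → ori v u = u)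
    (hcyc : ∀ v, gdeg T v = n → ∀ u u', T.Adj v u → T.Adj v u' →
      ∃ j : ℕ, ((ori v) ^ j) u = u')
    (v : V) (hv : gdeg T v = 1) :
    ∃! q : Σ w : V, T.Walk v w,
      gdeg T q.1 = 1 ∧ q.2.IsPath ∧ 0 < q.2.length ∧
      ∀ i, 0 < i → i < q.2.length →
        ori (q.2.getVert i) (q.2.getVert (i - 1)) = q.2.getVert (i + 1) := by
  classical
  obtain ⟨v1, hv1⟩ : ∃ x, T.neighborSet v = {x} := Set.ncard_eq_one.mp hv
  have hadj_v1 : T.Adj v v1 := by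
    have : v1 ∈ T.neighborSet v := by rw [hv1]; exact Set.mem_singleton _
    exact this
  -- unique neighbor of a degree-one vertex
  have hdeg1_unique : ∀ u x y : V, gdeg T u = 1 → T.Adj u x → T.Adj u y → x = y := by
    intro u x y h hx hy
    obtain ⟨z, hz⟩ := Set.ncard_eq_one.mp h
    have h1 : x ∈ T.neighborSet u := hx
    have h2 : y ∈ T.neighborSet u := hy
    rw [hz] at h1 h2
    rw [Set.mem_singleton_iff.mp h1, Set.mem_singleton_iff.mp h2]
  -- the forced sequence
  let f : ℕ → V × V := fun i => Nat.rec (v, v1) (fun _ p => (p.2, ori p.2 p.1)) i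
  let g : ℕ → V := fun i => (f i).1
  have hg0 : g 0 = v := rfl
  have hg1 : g 1 = v1 := rfl
  have hgrec : ∀ i, g (i+2) = ori (g (i+1)) (g i) := fun i => rfl
  -- orientation moves neighbors to neighbors
  have hmapsadj : ∀ u x : V, gdeg T u = n → T.Adj u x → T.Adj u (ori u x) := by
    intro u x hu hx
    by_contra hcon
    have h1 : ori u (ori u x) = ori u x := hfix u hu _ hcon
    have h2 : ori u x = x := (ori u).injective h1
    rw [h2] at hcon; exact hcon hx
  -- orientation fixes no neighbor
  have hnofix : ∀ u x : V, gdeg T u = n → T.Adj u x → ori u x ≠ x := by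
    intro u x hu hx heq
    have h2 : 1 < (T.neighborSet u).ncard := by
      have : (T.neighborSet u).ncard = n := hu
      omega
    obtain ⟨y, hy, hyx⟩ := Set.exists_ne_of_one_lt_ncard h2 x
    obtain ⟨j, hj⟩ := hcyc u hu x y hx hy
    have hfixiter : ∀ j : ℕ, ((ori u) ^ j) x = x := by
      intro j
      induction j with
      | zero => rfl
      | succ m ihm => rw [pow_succ, Equiv.Perm.mul_apply, heq, ihm]
    rw [hfixiter j] at hj
    exact hyx hj.symm
  -- distances are bounded
  have hdist_lt : ∀ x : V, T.dist v x < Fintype.card V := by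
    intro x
    obtain ⟨Q⟩ := hT.isConnected.preconnected v x
    calc T.dist v x ≤ Q.bypass.length := SimpleGraph.dist_le _
      _ < Fintype.card V := Q.bypass_isPath.length_lt
  -- main invariant
  have inv : ∀ i : ℕ, (∀ j, 0 < j → j ≤ i → gdeg T (g j) = n) →
      T.Adj (g i) (g (i+1)) ∧ T.dist v (g i) = i ∧ T.dist v (g (i+1)) = i + 1 := by
    intro i
    induction i with
    | zero =>
      intro _
      refine ⟨hadj_v1, SimpleGraph.dist_self, ?_⟩
      exact SimpleGraph.dist_eq_one_iff_adj.mpr hadj_v1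
    | succ i ih =>
      intro H
      obtain ⟨hadj, hdi, hdi1⟩ := ih (fun j hj hji => H j hj (by omega))
      have hint : gdeg T (g (i+1)) = n := H (i+1) (by omega) le_rfl
      have hadj2 : T.Adj (g (i+1)) (g (i+2)) := by
        rw [hgrec i]; exact hmapsadj _ _ hint hadj.symm
      have hne : g (i+2) ≠ g i := by
        rw [hgrec i]; exact hnofix _ _ hint hadj.symm
      refine ⟨hadj2, hdi1, ?_⟩
      rcases dist_adj hT v hadj2 with h1 | h1
      · exfalso
        have hx : T.dist v (g i) + 1 = T.dist v (g (i+1)) := by omega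
        have hy : T.dist v (g (i+2)) + 1 = T.dist v (g (i+1)) := by omega
        exact hne (closer_unique hT v hadj2 hadj.symm h1.symm hx)
      · show T.dist v (g (i+2)) = i + 2
        omega
  -- termination
  have hterm : ∃ k, 0 < k ∧ gdeg T (g k) ≠ n := by
    by_contra hcon
    push_neg at hcon
    have h1 := (inv (Fintype.card V) (fun j hj _ => hcon j hj)).2.1
    have h2 := hdist_lt (g (Fintype.card V))
    omega
  set k := Nat.find hterm with hkdef
  have hk := Nat.find_spec hterm
  have hkpos : 0 < k := hk.1
  have hkext : gdeg T (g k) = 1 := (hbi (g k)).resolve_right hk.2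
  have hkmin : ∀ j, 0 < j → j < k → gdeg T (g j) = n := by
    intro j hj hjk
    by_contra hc
    exact Nat.find_min hterm hjk ⟨hj, hc⟩
  have hadjall : ∀ i, i < k → T.Adj (g i) (g (i+1)) := fun i hi =>
    (inv i (fun j hj hji => hkmin j hj (by omega))).1
  have hdistall : ∀ i, i ≤ k → T.dist v (g i) = i := by
    intro i hi
    cases i with
    | zero => rw [hg0]; exact SimpleGraph.dist_self
    | succ m => exact (inv m (fun j hj hji => hkmin j hj (by omega))).2.2
  -- the canonical walk
  let W : T.Walk v (g k) := (walkOfFun k g hadjall).copy hg0 rfl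
  have hWlen : W.length = k := by
    simp [W, walkOfFun_length]
  have hWget : ∀ i, i ≤ k → W.getVert i = g i := by
    intro i hi
    simp only [W, SimpleGraph.Walk.getVert_copy]
    exact walkOfFun_getVert k g hadjall i hi
  have hWpath : W.IsPath := by
    rw [SimpleGraph.Walk.isPath_def]
    simp only [W, SimpleGraph.Walk.support_copy]
    rw [walkOfFun_support]
    refine List.Nodup.map_on ?_ List.nodup_range
    intro a ha b hb hab
    rw [List.mem_range] at ha hb
    have h1 := hdistall a (by omega)
    have h2 := hdistall b (by omega)
    rw [hab] at h1
    omega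
  have hWcond : ∀ i, 0 < i → i < W.length →
      ori (W.getVert i) (W.getVert (i - 1)) = W.getVert (i + 1) := by
    intro i hi hik
    rw [hWlen] at hik
    obtain ⟨m, rfl⟩ := Nat.exists_eq_add_one_of_ne_zero (by omega : i ≠ 0)
    rw [hWget (m+1) (by omega), hWget (m+1+1) (by omega)]
    have : m + 1 - 1 = m := by omega
    rw [this, hWget m (by omega)]
  refine ⟨⟨g k, W⟩, ⟨hkext, hWpath, by rw [hWlen]; exact hkpos, hWcond⟩, ?_⟩
  -- uniqueness
  rintro ⟨w', W'⟩ ⟨h1, h2, h3, h4⟩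
  simp only at h1 h2 h3 h4
  -- vertices of W' agree with g
  have key : ∀ i : ℕ, (i ≤ W'.length → W'.getVert i = g i) ∧
      (i + 1 ≤ W'.length → W'.getVert (i+1) = g (i+1)) := by
    intro i
    induction i with
    | zero =>
      constructor
      · intro _; exact W'.getVert_zero
      · intro hlen
        have hA : T.Adj v (W'.getVert 1) := by
          have := W'.adj_getVert_succ (i := 0) (by omega)
          simpa using this

        have : W'.getVert 1 ∈ T.neighborSet v := hA
        rw [hv1] at this
        show W'.getVert 1 = g 1
        rw [Set.mem_singleton_iff.mp this]
        exact hg1.symm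
    | succ m ihm =>
      refine ⟨ihm.2, ?_⟩
      intro hlen
      have e0 : W'.getVert m = g m := ihm.1 (by omega)
      have e1 : W'.getVert (m+1) = g (m+1) := ihm.2 (by omega)
      have hadjA : T.Adj (W'.getVert (m+1)) (W'.getVert m) :=
        (W'.adj_getVert_succ (by omega)).symm
      have hadjB : T.Adj (W'.getVert (m+1)) (W'.getVert (m+1+1)) :=
        W'.adj_getVert_succ (by omega)
      have hneq : W'.getVert m ≠ W'.getVert (m+1+1) := by
        intro he
        have := isPath_getVert_inj W' h2 m (m+1+1) (by omega) (by omega) he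
        omega
      have hdeg : gdeg T (W'.getVert (m+1)) = n := by
        rcases hbi (W'.getVert (m+1)) with h | h
        · exact absurd (hdeg1_unique _ _ _ h hadjA hadjB) hneq
        · exact h
      have h4m := h4 (m+1) (by omega) (by omega)
      have hm1 : m + 1 - 1 = m := by omega
      rw [hm1, e0, e1] at h4m
      rw [← h4m]
  have hgv : ∀ i, i ≤ W'.length → W'.getVert i = g i := fun i hi => (key i).1 hi
  -- the length of W' is k
  have hLk : W'.length = k := by
    rcases lt_trichotomy W'.length k with hlt | heq | hgt
    · exfalso
      have hend : W'.getVert W'.length = g W'.length := hgv _ le_rfl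
      rw [W'.getVert_length] at hend
      have hint : gdeg T (g W'.length) = n := hkmin _ h3 hlt
      rw [← hend, h1] at hint
      omega
    · exact heq
    · exfalso
      obtain ⟨m, hm⟩ := Nat.exists_eq_add_one_of_ne_zero (by omega : k ≠ 0)
      have hadjA : T.Adj (W'.getVert (m+1)) (W'.getVert m) :=
        (W'.adj_getVert_succ (by omega)).symm
      have hadjB : T.Adj (W'.getVert (m+1)) (W'.getVert (m+1+1)) :=
        W'.adj_getVert_succ (by omega)
      have hneq : W'.getVert m ≠ W'.getVert (m+1+1) := by
        intro he
        have := isPath_getVert_inj W' h2 m (m+1+1) (by omega) (by omega) he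
        omega
      have hext : gdeg T (W'.getVert (m+1)) = 1 := by
        rw [hgv (m+1) (by omega), ← hm]; exact hkext
      exact hneq (hdeg1_unique _ _ _ hext hadjA hadjB)
  -- the endpoint of W' is g k
  have hw' : w' = g k := by
    have := hgv W'.length le_rfl
    rw [W'.getVert_length, hLk] at this
    exact this
  subst hw'
  have hWW : W' = W := by
    apply walk_eq_of_getVert
    · rw [hLk, hWlen]
    · intro i
      rcases le_or_gt i k with hi | hi
      · rw [hgv i (by omega), hWget i hi]
      · rw [W'.getVert_of_length_le (by omega), W.getVert_of_length_le (by omega)]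
  rw [hWW]
end

section
/- Let T be a bi-valent tree with valence set {1,n} equipped with an orientation, and let r : V_e → V_e be the map sending each external vertex v to the unique external vertex r(v) such that the reduced path from v to r(v) is well oriented. Then for every external vertex v, the orbit of v under iteration of r is all of V_e; that is, V_e = { r^i(v) : 0 ≤ i < |V_e| }. -/
open SimpleGraph

section Aux
variable {V : Type*} [Fintype V] {T : SimpleGraph V}
set_option linter.unusedSectionVars false

lemma aux_getVert_ne {u w : V} {p : T.Walk u w} (hp : p.IsPath) :
    ∀ i j, i < j → j ≤ p.length → p.getVert i ≠ p.getVert j := by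
  classical
  induction p with
  | nil => intro i j hij hj; simp [Walk.length_nil] at hj; omega
  | cons h q ih =>
    rename_i a b c
    rw [SimpleGraph.Walk.cons_isPath_iff] at hp
    intro i j hij hj
    match i, j with
    | 0, (j+1) =>
      simp only [Walk.getVert_zero, Walk.getVert_cons_succ]
      intro hEq
      exact hp.2 (Walk.mem_support_iff_exists_getVert.2 ⟨j, hEq.symm, by
        have := hj; simp [Walk.length_cons] at this; omega⟩)
    | (i+1), (j+1) =>
      simp only [Walk.getVert_cons_succ]
      exact ih hp.1 i j (by omega) (by simpa [Walk.length_cons] using hj)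

lemma aux_path_eq (hT : T.IsTree) {b w : V} (p q : T.Walk b w)
    (hp : p.IsPath) (hq : q.IsPath) : p = q := by
  have := (isAcyclic_iff_path_unique.mp hT.IsAcyclic) (⟨p, hp⟩ : T.Path b w) ⟨q, hq⟩
  exact congrArg Subtype.val this

lemma aux_exists_path (hT : T.IsTree) (b w : V) :
    ∃ p : T.Walk b w, p.IsPath ∧ p.length = T.dist b w :=
  hT.isConnected.exists_path_of_dist b w

open Classical in
lemma aux_support_dist {a w : V} (q : T.Walk a w) {b : V}
    (hb : b ∈ q.support) : T.dist b w ≤ q.length := by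
  have h1 := SimpleGraph.dist_le (q.dropUntil b hb)
  exact h1.trans (q.length_dropUntil_le hb)


open Classical in
lemma aux_dist_ne (hT : T.IsTree) {a b : V} (hab : T.Adj a b) (w : V) :
    T.dist a w ≠ T.dist b w := by
  -- wlog via symmetric argument
  have key : ∀ a b : V, T.Adj a b → T.dist a w = T.dist b w → False := by
    intro a b hab hEq
    rcases Nat.eq_zero_or_pos (T.dist a w) with h0 | hdpos
    · have ha : a = w := (hT.isConnected a w).dist_eq_zero_iff.mp h0
      have hb : b = w := (hT.isConnected b w).dist_eq_zero_iff.mp (by omega)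
      exact T.loopless.irrefl w (by rwa [ha, hb] at hab)
    · obtain ⟨q, hq, hqlen⟩ := aux_exists_path hT a w
      by_cases hbs : b ∈ q.support
      · -- dist b w ≤ d - (length of takeUntil) with takeUntil length ≥ 1
        have hsplit := q.take_spec hbs
        have hlen : (q.takeUntil b hbs).length + (q.dropUntil b hbs).length = q.length := by
          conv_rhs => rw [← hsplit]
          rw [Walk.length_append]
        have htpos : 0 < (q.takeUntil b hbs).length := by
          rcases Nat.eq_zero_or_pos (q.takeUntil b hbs).length with h | h
          · exact absurd (Walk.eq_of_length_eq_zero h) (fun hEq => T.loopless.irrefl a (hEq ▸ hab))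
          · exact h
        have : T.dist b w ≤ (q.dropUntil b hbs).length := SimpleGraph.dist_le _
        omega
      · -- cons gives a path b → w of length d+1; but dist b w = d, contradiction by uniqueness
        obtain ⟨q', hq', hq'len⟩ := aux_exists_path hT b w
        have hcons : (q.cons hab.symm).IsPath := hq.cons hbs
        have := aux_path_eq hT (q.cons hab.symm) q' hcons hq'
        have hlen := congrArg Walk.length this
        rw [Walk.length_cons] at hlen
        omega
  intro h
  rcases Nat.lt_or_ge (T.dist a w) (T.dist b w) with h' | h'
  · exact key a b hab h
  · exact key a b hab h

open Classical in
lemma aux_toward (hT : T.IsTree) {b a c w : V} (hba : T.Adj b a) (hbc : T.Adj b c)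
    (ha : T.dist a w + 1 = T.dist b w) (hc : T.dist c w + 1 = T.dist b w) : a = c := by
  obtain ⟨qa, hqa, hqalen⟩ := aux_exists_path hT a w
  obtain ⟨qc, hqc, hqclen⟩ := aux_exists_path hT c w
  have hbsa : b ∉ qa.support := by
    intro hb
    have := aux_support_dist qa hb
    omega
  have hbsc : b ∉ qc.support := by
    intro hb
    have := aux_support_dist qc hb
    omega
  have hpa : (qa.cons hba).IsPath := hqa.cons hbsa
  have hpc : (qc.cons hbc).IsPath := hqc.cons hbsc
  have := aux_path_eq hT (qa.cons hba) (qc.cons hbc) hpa hpc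
  have h1 := congrArg (fun p => Walk.getVert p 1) this
  simpa [Walk.getVert_cons_succ] using h1

/-- the measure: number of vertices strictly closer to `b` than to `a`. -/
noncomputable def emeas (T : SimpleGraph V) (a b : V) : ℕ :=
  {w : V | T.dist b w < T.dist a w}.ncard

lemma aux_measure_lt (hT : T.IsTree) {a b c : V} (hab : T.Adj a b) (hbc : T.Adj b c)
    (hca : c ≠ a) : emeas T b c < emeas T a b := by
  have hsub : {w : V | T.dist c w < T.dist b w} ⊆ {w : V | T.dist b w < T.dist a w} := by
    intro w hw
    simp only [Set.mem_setOf_eq] at hw ⊢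
    -- adjacent vertices have dist differing by ≤ 1 and ≠
    by_contra hcon
    push_neg at hcon
    have hne := aux_dist_ne hT hab w
    have h1 : T.dist a w + 1 = T.dist b w := by
      have htri := (hT.isConnected).dist_triangle (u := b) (v := a) (w := w)
      rw [SimpleGraph.dist_comm (u := b) (v := a), SimpleGraph.dist_eq_one_iff_adj.mpr hab] at htri
      omega
    have h2 : T.dist c w + 1 = T.dist b w := by
      have htri := (hT.isConnected).dist_triangle (u := b) (v := c) (w := w)
      rw [SimpleGraph.dist_eq_one_iff_adj.mpr hbc] at htri
      omega
    exact hca (aux_toward hT (hab.symm) hbc h1 h2).symm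
  have hbmem : b ∈ {w : V | T.dist b w < T.dist a w} := by
    simp only [Set.mem_setOf_eq, SimpleGraph.dist_self]
    have := SimpleGraph.dist_eq_one_iff_adj.mpr hab
    omega
  have hbnot : b ∉ {w : V | T.dist c w < T.dist b w} := by
    simp only [Set.mem_setOf_eq, SimpleGraph.dist_self]
    omega
  have hfin : {w : V | T.dist b w < T.dist a w}.Finite := Set.toFinite _
  exact Set.ncard_lt_ncard (Set.ssubset_iff_of_subset hsub |>.mpr ⟨b, hbmem, hbnot⟩) hfin

open Classical in
/-- unique neighbor of a leaf -/
noncomputable def nbr (T : SimpleGraph V) (u : V) : V :=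
  if h : ∃ x, T.neighborSet u = {x} then h.choose else u

lemma nbr_spec {u : V} (hu : gdeg T u = 1) : T.neighborSet u = {nbr T u} := by
  classical
  have h : ∃ x, T.neighborSet u = {x} := Set.ncard_eq_one.mp hu
  rw [nbr]
  rw [dif_pos h]
  exact h.choose_spec

lemma leaf_adj_eq {u x : V} (hu : gdeg T u = 1) (hx : T.Adj u x) : x = nbr T u := by
  have := nbr_spec hu
  have hmem : x ∈ T.neighborSet u := hx
  rw [this] at hmem
  exact hmem

lemma nbr_adj {u : V} (hu : gdeg T u = 1) : T.Adj u (nbr T u) := by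
  have : nbr T u ∈ T.neighborSet u := by rw [nbr_spec hu]; rfl
  exact this

variable {n : ℕ} {ori : V → Equiv.Perm V}

lemma ori_adj (hfix : ∀ v, gdeg T v = n → ∀ u, ¬ T.Adj v u → ori v u = u)
    {b u : V} (hb : gdeg T b = n) (hu : T.Adj b u) : T.Adj b (ori b u) := by
  by_contra h
  have h1 : ori b (ori b u) = ori b u := hfix b hb (ori b u) h
  have h2 : ori b u = u := (ori b).injective h1
  rw [h2] at h
  exact h hu

/-- the successor function on (directed-edge-like) pairs -/
noncomputable def nxt (T : SimpleGraph V) (n : ℕ) (ori : V → Equiv.Perm V) (b a : V) : V :=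
  if gdeg T b = n then ori b a else a

noncomputable def fe (T : SimpleGraph V) (n : ℕ) (ori : V → Equiv.Perm V)
    (e : V × V) : V × V := (e.2, nxt T n ori e.2 e.1)

lemma nxt_inj (b : V) : Function.Injective (nxt T n ori b) := by
  unfold nxt
  split
  · exact (ori b).injective
  · exact fun x y h => h

lemma fe_inj : Function.Injective (fe T n ori) := by
  intro e e' h
  have h1 : e.2 = e'.2 := congrArg Prod.fst h
  have h2 : nxt T n ori e.2 e.1 = nxt T n ori e'.2 e'.1 := congrArg Prod.snd h
  rw [← h1] at h2
  exact Prod.ext (nxt_inj e.2 h2) h1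

lemma nxt_adj (hfix : ∀ v, gdeg T v = n → ∀ u, ¬ T.Adj v u → ori v u = u)
    {a b : V} (hab : T.Adj a b) : T.Adj b (nxt T n ori b a) := by
  unfold nxt
  split
  · exact ori_adj hfix (by assumption) hab.symm
  · exact hab.symm

lemma nxt_leaf (hn : 1 < n) {b : V} (hb : gdeg T b = 1) (a : V) : nxt T n ori b a = a := by
  unfold nxt
  rw [if_neg (by omega)]

/-- The reversal lemma: any forward-closed set of directed edges is closed under reversal. -/
lemma rev_lemma (hn : 1 < n) (hT : T.IsTree)
    (hbi : ∀ v, gdeg T v = 1 ∨ gdeg T v = n)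
    (hfix : ∀ v, gdeg T v = n → ∀ u, ¬ T.Adj v u → ori v u = u)
    (O : Set (V × V)) (hO : ∀ e ∈ O, fe T n ori e ∈ O) :
    ∀ (M : ℕ) (a b : V), emeas T a b < M → T.Adj a b → (a, b) ∈ O → (b, a) ∈ O := by
  intro M
  induction M with
  | zero => intro a b h; omega
  | succ M ih =>
    intro a b hm hab hmem
    by_cases hb : gdeg T b = n
    · -- b internal
      have hstep : ∀ j, 1 ≤ j → (b, ((ori b) ^ j) a) ∈ O ∧ T.Adj b (((ori b) ^ j) a) := by
        intro j hj
        induction j, hj using Nat.le_induction with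
        | base =>
          have h1 : fe T n ori (a, b) = (b, ((ori b) ^ 1) a) := by
            simp [fe, nxt, hb, pow_one]
          constructor
          · rw [← h1]; exact hO _ hmem
          · rw [pow_one]
            exact ori_adj hfix hb hab.symm
        | succ j hj ihj =>
          obtain ⟨hmemj, hadjj⟩ := ihj
          have hpow : ((ori b) ^ (j + 1)) a = (ori b) (((ori b) ^ j) a) := by
            rw [pow_succ', Equiv.Perm.mul_apply]
          by_cases hja : ((ori b) ^ j) a = a
          · -- wraps around to σ a = σ^1 a
            have h1 : fe T n ori (a, b) = (b, ((ori b) ^ (j+1)) a) := by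
              simp [fe, nxt, hb, hpow, hja]
            constructor
            · rw [← h1]; exact hO _ hmem
            · rw [hpow, hja]
              exact ori_adj hfix hb hab.symm
          · -- strictly smaller subtree: use strong induction hypothesis
            have hlt : emeas T b (((ori b) ^ j) a) < emeas T a b :=
              aux_measure_lt hT hab hadjj hja
            have hrev : (((ori b) ^ j) a, b) ∈ O := ih b _ (by omega) hadjj hmemj
            have h1 : fe T n ori (((ori b) ^ j) a, b) = (b, ((ori b) ^ (j+1)) a) := by
              simp [fe, nxt, hb, hpow]
            constructor
            · rw [← h1]; exact hO _ hrev
            · rw [hpow]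
              exact ori_adj hfix hb hadjj
      have hk : 1 ≤ orderOf (ori b) := orderOf_pos (ori b)
      have := (hstep (orderOf (ori b)) hk).1
      rwa [pow_orderOf_eq_one, Equiv.Perm.one_apply] at this
    · -- b is a leaf
      have hb1 : gdeg T b = 1 := (hbi b).resolve_right hb
      have h1 : fe T n ori (a, b) = (b, a) := by
        simp [fe, nxt_leaf hn hb1]
      rw [← h1]
      exact hO _ hmem

lemma rev' (hn : 1 < n) (hT : T.IsTree)
    (hbi : ∀ v, gdeg T v = 1 ∨ gdeg T v = n)
    (hfix : ∀ v, gdeg T v = n → ∀ u, ¬ T.Adj v u → ori v u = u)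
    (O : Set (V × V)) (hO : ∀ e ∈ O, fe T n ori e ∈ O)
    {a b : V} (hab : T.Adj a b) (hmem : (a, b) ∈ O) : (b, a) ∈ O :=
  rev_lemma hn hT hbi hfix O hO (emeas T a b + 1) a b (Nat.lt_succ_self _) hab hmem

lemma out_lemma (hn : 1 < n) (hT : T.IsTree)
    (hbi : ∀ v, gdeg T v = 1 ∨ gdeg T v = n)
    (hfix : ∀ v, gdeg T v = n → ∀ u, ¬ T.Adj v u → ori v u = u)
    (hcyc : ∀ v, gdeg T v = n → ∀ u u', T.Adj v u → T.Adj v u' →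
      ∃ j : ℕ, ((ori v) ^ j) u = u')
    (O : Set (V × V)) (hO : ∀ e ∈ O, fe T n ori e ∈ O)
    {a b c : V} (hab : T.Adj a b) (hbc : T.Adj b c) (hmem : (a, b) ∈ O) : (b, c) ∈ O := by
  by_cases hb : gdeg T b = n
  · obtain ⟨j, hj⟩ := hcyc b hb a c hab.symm hbc
    have hstep : ∀ j, (b, ((ori b) ^ j) a) ∈ O ∧ T.Adj b (((ori b) ^ j) a) := by
      intro j
      induction j with
      | zero =>
        rw [pow_zero]
        exact ⟨rev' hn hT hbi hfix O hO hab hmem, hab.symm⟩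
      | succ j ihj =>
        obtain ⟨hmemj, hadjj⟩ := ihj
        have hrev : (((ori b) ^ j) a, b) ∈ O := rev' hn hT hbi hfix O hO hadjj hmemj
        have hpow : ((ori b) ^ (j + 1)) a = (ori b) (((ori b) ^ j) a) := by
          rw [pow_succ', Equiv.Perm.mul_apply]
        have h1 : fe T n ori (((ori b) ^ j) a, b) = (b, ((ori b) ^ (j+1)) a) := by
          simp [fe, nxt, hb, hpow]
        refine ⟨by rw [← h1]; exact hO _ hrev, ?_⟩
        rw [hpow]
        exact ori_adj hfix hb hadjj
    have := (hstep j).1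
    rwa [hj] at this
  · have hb1 : gdeg T b = 1 := (hbi b).resolve_right hb
    have hca : c = a := by
      rw [leaf_adj_eq hb1 hbc, leaf_adj_eq hb1 hab.symm]
    rw [hca]
    exact rev' hn hT hbi hfix O hO hab hmem

lemma all_edges (hn : 1 < n) (hT : T.IsTree)
    (hbi : ∀ v, gdeg T v = 1 ∨ gdeg T v = n)
    (hfix : ∀ v, gdeg T v = n → ∀ u, ¬ T.Adj v u → ori v u = u)
    (hcyc : ∀ v, gdeg T v = n → ∀ u u', T.Adj v u → T.Adj v u' →
      ∃ j : ℕ, ((ori v) ^ j) u = u')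
    (O : Set (V × V)) (hO : ∀ e ∈ O, fe T n ori e ∈ O)
    (v : V) (hv : gdeg T v = 1) (hv0 : (v, nbr T v) ∈ O) :
    ∀ a b, T.Adj a b → (a, b) ∈ O := by
  set S : Set V := {w | ∀ x, T.Adj w x → (w, x) ∈ O} with hS
  have hvS : v ∈ S := by
    intro x hx
    rwa [leaf_adj_eq hv hx]
  have hclosed : ∀ w y, w ∈ S → T.Adj w y → y ∈ S := by
    intro w y hw hwy x hyx
    exact out_lemma hn hT hbi hfix hcyc O hO hwy hyx (hw y hwy)
  have hall : ∀ w, w ∈ S := by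
    have hwalk : ∀ (u w : V) (_ : T.Walk u w), u ∈ S → w ∈ S := by
      intro u w p
      induction p with
      | nil => exact id
      | cons h q ihq => intro hu; exact ihq (hclosed _ _ hu h)
    intro w
    exact hwalk v w (hT.isConnected v w).some hvS
  intro a b hab
  exact hall a b hab

lemma path_internal (hbi : ∀ v, gdeg T v = 1 ∨ gdeg T v = n)
    {u w : V} {p : T.Walk u w} (hp : p.IsPath) {i : ℕ} (h0 : 0 < i) (hl : i < p.length) :
    gdeg T (p.getVert i) = n := by
  obtain ⟨m, rfl⟩ : ∃ m, i = m + 1 := ⟨i - 1, by omega⟩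
  have hadj1 : T.Adj (p.getVert m) (p.getVert (m + 1)) := p.adj_getVert_succ (by omega)
  have hadj2 : T.Adj (p.getVert (m + 1)) (p.getVert (m + 2)) := p.adj_getVert_succ (by omega)
  have hne : p.getVert m ≠ p.getVert (m + 2) := aux_getVert_ne hp m (m + 2) (by omega) (by omega)
  refine (hbi _).resolve_left ?_
  intro h1
  exact hne ((leaf_adj_eq h1 hadj1.symm).trans (leaf_adj_eq h1 hadj2).symm)

lemma step_lemma (hn : 1 < n) (hbi : ∀ v, gdeg T v = 1 ∨ gdeg T v = n)
    {u ru : V} (hu : gdeg T u = 1) (hru : gdeg T ru = 1)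
    (p : T.Walk u ru) (hp : p.IsPath) (hlen : 0 < p.length)
    (hori : ∀ i, 0 < i → i < p.length →
      ori (p.getVert i) (p.getVert (i - 1)) = p.getVert (i + 1)) :
    ∃ k, 0 < k ∧ (fe T n ori)^[k] (u, nbr T u) = (ru, nbr T ru) ∧
      ∀ d, 0 < d → d < k → gdeg T (((fe T n ori)^[d] (u, nbr T u)).1) = n := by
  have hiter : ∀ i, i < p.length →
      (fe T n ori)^[i] (u, nbr T u) = (p.getVert i, p.getVert (i + 1)) := by
    intro i
    induction i with
    | zero =>
      intro _
      have h1 : p.getVert 1 = nbr T u := leaf_adj_eq hu (by simpa using p.adj_getVert_succ hlen)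
      simp [p.getVert_zero, h1]
    | succ i ihi =>
      intro hi
      have hlt : i < p.length := by omega
      rw [Function.iterate_succ_apply', ihi hlt]
      have hideg : gdeg T (p.getVert (i + 1)) = n := path_internal hbi hp (by omega) hi
      have hnxt : nxt T n ori (p.getVert (i + 1)) (p.getVert i) = p.getVert (i + 2) := by
        rw [nxt, if_pos hideg]
        have := hori (i + 1) (by omega) hi
        simpa using this
      simp [fe, hnxt]
  obtain ⟨L, hL⟩ : ∃ L, p.length = L + 1 := ⟨p.length - 1, by omega⟩
  refine ⟨p.length, hlen, ?_, ?_⟩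
  · have hL' : (fe T n ori)^[L] (u, nbr T u) = (p.getVert L, p.getVert (L + 1)) :=
      hiter L (by omega)
    have hgl : p.getVert (L + 1) = ru := by rw [← hL]; exact p.getVert_length
    have hadjL : T.Adj (p.getVert L) ru := by
      have := p.adj_getVert_succ (i := L) (by omega)
      rwa [hgl] at this
    have hnl : p.getVert L = nbr T ru := leaf_adj_eq hru hadjL.symm
    rw [hL, Function.iterate_succ_apply', hL', hgl]
    simp only [fe, hnl]
    rw [nxt_leaf hn hru]
  · intro d hd0 hdk
    rw [hiter d hdk]
    exact path_internal hbi hp hd0 hdk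

end Aux

/-- Let `T` be a bi-valent tree with valence set `{1, n}` equipped with an
orientation (for each internal vertex `v` an `n`-cycle permutation `ori v` of its
neighbors), and let `r : V_e → V_e` send each external vertex `v` to the unique external
vertex `r v` such that the reduced (simple, non-trivial) path from `v` to `r v` is well
oriented. Then for every external vertex `v` the orbit of `v` under iteration of `r` is all
of `V_e`: `V_e = { r^[i] v : 0 ≤ i < |V_e| }`. -/
theorem stmt_9 {V : Type*} [Fintype V] {n : ℕ} (hn : 1 < n)
    (T : SimpleGraph V) (hT : T.IsTree)
    (hbi : ∀ v, gdeg T v = 1 ∨ gdeg T v = n)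
    (ori : V → Equiv.Perm V)
    (hfix : ∀ v, gdeg T v = n → ∀ u, ¬ T.Adj v u → ori v u = u)
    (hcyc : ∀ v, gdeg T v = n → ∀ u u', T.Adj v u → T.Adj v u' →
      ∃ j : ℕ, ((ori v) ^ j) u = u')
    (r : V → V)
    (hr : ∀ v, gdeg T v = 1 → gdeg T (r v) = 1 ∧
      ∃ p : T.Walk v (r v), p.IsPath ∧ 0 < p.length ∧
        ∀ i, 0 < i → i < p.length →
          ori (p.getVert i) (p.getVert (i - 1)) = p.getVert (i + 1))
    (v : V) (hv : gdeg T v = 1) :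
    {u | gdeg T u = 1} = {u | ∃ i < {u | gdeg T u = 1}.ncard, r^[i] v = u} := by
  classical
  set F : V × V → V × V := fe T n ori with hF
  set O : Set (V × V) := {e | ∃ j, F^[j] (v, nbr T v) = e} with hOdef
  have hO : ∀ e ∈ O, F e ∈ O := by
    rintro e ⟨j, hj⟩
    exact ⟨j + 1, by rw [Function.iterate_succ_apply', hj]⟩
  have hv0 : ((v, nbr T v) : V × V) ∈ O := ⟨0, rfl⟩
  have hedges : ∀ a b, T.Adj a b → (a, b) ∈ O :=
    all_edges hn hT hbi hfix hcyc O hO v hv hv0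
  -- step data for each leaf
  have hstepu : ∀ u, gdeg T u = 1 → ∃ k, 0 < k ∧
      F^[k] (u, nbr T u) = (r u, nbr T (r u)) ∧
      ∀ d, 0 < d → d < k → gdeg T ((F^[d] (u, nbr T u)).1) = n := by
    intro u hu
    obtain ⟨hru, p, hp, hlen, hori⟩ := hr u hu
    exact step_lemma hn hbi hu hru p hp hlen hori
  choose k hkpos hkeq hkint using hstepu
  -- iterates of r stay leaves
  have leaf_iter : ∀ i, gdeg T (r^[i] v) = 1 := by
    intro i
    induction i with
    | zero => exact hv
    | succ i ih => rw [Function.iterate_succ_apply']; exact (hr _ ih).1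
  -- simulation of F-iterates by r-iterates
  have simulate : ∀ j, ∃ w, ∃ hw : gdeg T w = 1, ∃ i d, r^[i] v = w ∧ d < k w hw ∧
      F^[j] (v, nbr T v) = F^[d] (w, nbr T w) := by
    intro j
    induction j with
    | zero => exact ⟨v, hv, 0, 0, rfl, hkpos v hv, rfl⟩
    | succ j ih =>
      obtain ⟨w, hw, i, d, hri, hd, hEq⟩ := ih
      have hstep : F^[j + 1] (v, nbr T v) = F^[d + 1] (w, nbr T w) := by
        rw [Function.iterate_succ_apply', hEq, Function.iterate_succ_apply']
      by_cases hdk : d + 1 = k w hw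
      · refine ⟨r w, (hr w hw).1, i + 1, 0, ?_, hkpos _ _, ?_⟩
        · rw [Function.iterate_succ_apply', hri]
        · rw [hstep, hdk, hkeq w hw]
          rfl
      · exact ⟨w, hw, i, d + 1, hri, by omega, hstep⟩
  -- every leaf is in the forward r-orbit of v
  have cover : ∀ u, gdeg T u = 1 → ∃ i, r^[i] v = u := by
    intro u hu
    obtain ⟨j, hj⟩ := hedges u (nbr T u) (nbr_adj hu)
    obtain ⟨w, hw, i, d, hri, hd, hEq⟩ := simulate j
    rw [hEq] at hj
    rcases Nat.eq_zero_or_pos d with h0 | h0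
    · subst h0
      have : w = u := congrArg Prod.fst hj
      exact ⟨i, this ▸ hri⟩
    · exfalso
      have := hkint w hw d h0 hd
      rw [hj] at this
      simp only at this
      omega
  -- r is injective on leaves
  have rinj_le : ∀ u u' (hu : gdeg T u = 1) (hu' : gdeg T u' = 1),
      k u hu ≤ k u' hu' → r u = r u' → u = u' := by
    intro u u' hu hu' hle hEq
    have h1 : F^[k u hu] (u, nbr T u) = F^[k u' hu'] (u', nbr T u') := by
      rw [hkeq u hu, hkeq u' hu', hEq]
    set m := k u' hu' - k u hu with hm
    have h2 : F^[k u' hu'] (u', nbr T u') = F^[k u hu] (F^[m] (u', nbr T u')) := by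
      rw [← Function.iterate_add_apply]
      congr 1
      omega
    have hFinj : Function.Injective F := fe_inj
    have h3 : (u, nbr T u) = F^[m] (u', nbr T u') :=
      hFinj.iterate (k u hu) (h1.trans h2)
    rcases Nat.eq_zero_or_pos m with h0 | h0
    · rw [h0] at h3
      exact congrArg Prod.fst h3
    · exfalso
      have hmlt : m < k u' hu' := by
        have := hkpos u hu
        omega
      have := hkint u' hu' m h0 hmlt
      rw [← h3] at this
      simp only at this
      omega
  have rinj : ∀ u u', gdeg T u = 1 → gdeg T u' = 1 → r u = r u' → u = u' := by
    intro u u' hu hu' hEq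
    rcases le_total (k u hu) (k u' hu') with h | h
    · exact rinj_le u u' hu hu' h hEq
    · exact (rinj_le u' u hu' hu h hEq.symm).symm
  -- pigeonhole: find a positive period m0 ≤ N with r^[m0] v = v
  set N := {u | gdeg T u = 1}.ncard with hN
  have hLf : ({u | gdeg T u = 1} : Set V).Finite := Set.toFinite _
  have hcard : hLf.toFinset.card = N := by
    rw [hN, Set.ncard_eq_toFinset_card _ hLf]
  obtain ⟨i₀, hi₀, j₀, hj₀, hne, hij⟩ :
      ∃ i₀ ∈ Finset.range (N + 1), ∃ j₀ ∈ Finset.range (N + 1),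
        i₀ ≠ j₀ ∧ r^[i₀] v = r^[j₀] v := by
    have hmaps : ∀ i ∈ Finset.range (N + 1), r^[i] v ∈ hLf.toFinset := by
      intro i _
      rw [Set.Finite.mem_toFinset]
      exact leaf_iter i
    have hlt : hLf.toFinset.card < (Finset.range (N + 1)).card := by
      rw [hcard, Finset.card_range]
      omega
    obtain ⟨i₀, hi₀, j₀, hj₀, hne, hij⟩ :=
      Finset.exists_ne_map_eq_of_card_lt_of_maps_to hlt hmaps
    exact ⟨i₀, hi₀, j₀, hj₀, hne, hij⟩
  -- cancellation
  have cancel : ∀ m x y, gdeg T x = 1 → gdeg T y = 1 → r^[m] x = r^[m] y → x = y := by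
    intro m
    induction m with
    | zero => intro x y _ _ h; exact h
    | succ m ihm =>
      intro x y hx hy h
      rw [Function.iterate_succ_apply, Function.iterate_succ_apply] at h
      exact rinj x y hx hy (ihm (r x) (r y) (hr x hx).1 (hr y hy).1 h)
  have key : ∃ m0, 0 < m0 ∧ m0 ≤ N ∧ r^[m0] v = v := by
    rcases Nat.lt_or_ge i₀ j₀ with hlt | hge
    · refine ⟨j₀ - i₀, by omega, by simp only [Finset.mem_range] at hj₀; omega, ?_⟩
      have h1 : r^[i₀] (r^[j₀ - i₀] v) = r^[i₀] v := by
        rw [← Function.iterate_add_apply]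
        rw [show i₀ + (j₀ - i₀) = j₀ by omega]
        exact hij.symm
      exact cancel i₀ _ v (leaf_iter _) hv h1
    · have hlt : j₀ < i₀ := by omega
      refine ⟨i₀ - j₀, by omega, by simp only [Finset.mem_range] at hi₀; omega, ?_⟩
      have h1 : r^[j₀] (r^[i₀ - j₀] v) = r^[j₀] v := by
        rw [← Function.iterate_add_apply]
        rw [show j₀ + (i₀ - j₀) = i₀ by omega]
        exact hij
      exact cancel j₀ _ v (leaf_iter _) hv h1
  obtain ⟨m0, hm0pos, hm0N, hm0⟩ := key
  have periodic : ∀ a, r^[a * m0] v = v := by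
    intro a
    induction a with
    | zero => simp
    | succ a iha =>
      rw [show (a + 1) * m0 = a * m0 + m0 by ring, Function.iterate_add_apply, hm0, iha]
  have reduce : ∀ i, r^[i] v = r^[i % m0] v := by
    intro i
    conv_lhs => rw [show i = i % m0 + m0 * (i / m0) from (Nat.mod_add_div i m0).symm]
    rw [Function.iterate_add_apply, mul_comm, periodic]
  -- conclude
  ext u
  simp only [Set.mem_setOf_eq]
  constructor
  · intro hu
    obtain ⟨i, hi⟩ := cover u hu
    refine ⟨i % m0, ?_, ?_⟩
    · have := Nat.mod_lt i hm0pos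
      omega
    · rw [← reduce]
      exact hi
  · rintro ⟨i, _, rfl⟩
    exact leaf_iter i
end
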